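/- arXiv:2309.13932 — 9 statements merged into one kernel-verified Lean document; each statement's English description precedes it below -/
import Mathlib

section
/- Let d ≥ 3 be an integer and I ⊆ ℝ an open interval. Suppose w : (0,∞) × I → ℝ is smooth, bounded on (0,M) × J for each M > 0 and compact J ⊆ I, and satisfies ∂_s w(y,s) = ∂_y² w + ((d-1)/y)·∂_y w + (y^{1-d}·∫₀^y w(ζ,s)·ζ^{d-1} dζ − y/2)·∂_y w − w + w² for all (y,s) ∈ (0,∞) × I. Then the partial-mass function v(y,s) = y^{-d}·∫₀^y w(ζ,s)·ζ^{d-1} dζ satisfies ∂_s v(y,s) = ∂_y² v + ((d+1)/y)·∂_y v − (y/2)·∂_y v − v + d·v² + y·v·∂_y v for all (y,s) ∈ (0,∞) × I. -/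
open Filter MeasureTheory intervalIntegral Set Topology

lemma aux_pos (h : ℝ → ℝ) (δ M c : ℝ) (hδ : 0 < δ) (hc : 0 < c)
    (hcont : ContinuousOn h (Set.Ioc 0 δ))
    (hbound : ∀ x ∈ Set.Ioc (0:ℝ) δ, (∫ t in x..δ, h t) ≤ M)
    (hpos : ∀ x ∈ Set.Ioc (0:ℝ) δ, c ≤ x * h x) : False := by
  have hM0 : 0 ≤ M := by
    have := hbound δ ⟨hδ, le_rfl⟩
    simpa using this
  set u : ℝ := (M + 1) / c with hu
  have hu0 : 0 < u := by positivity
  set x : ℝ := δ * Real.exp (-u) with hxdef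
  have hx0 : 0 < x := by positivity
  have hxδ : x ≤ δ := by
    have h1 : Real.exp (-u) ≤ 1 := Real.exp_le_one_iff.mpr (by linarith)
    nlinarith
  have hIcc : Set.Icc x δ ⊆ Set.Ioc 0 δ := fun t ht => ⟨lt_of_lt_of_le hx0 ht.1, ht.2⟩
  have hI1 : IntervalIntegrable h volume x δ := by
    apply ContinuousOn.intervalIntegrable
    rw [Set.uIcc_of_le hxδ]
    exact hcont.mono hIcc
  have hI2 : IntervalIntegrable (fun t => c * (1 / t)) volume x δ := by
    apply ContinuousOn.intervalIntegrable
    rw [Set.uIcc_of_le hxδ]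
    exact (continuousOn_const.mul ((continuousOn_const.div continuousOn_id
      (fun t ht => ne_of_gt (lt_of_lt_of_le hx0 ht.1)))))
  have hmono : ∫ t in x..δ, c * (1 / t) ≤ ∫ t in x..δ, h t := by
    apply intervalIntegral.integral_mono_on hxδ hI2 hI1
    intro t ht
    have ht0 : 0 < t := lt_of_lt_of_le hx0 ht.1
    have := hpos t (hIcc ht)
    rw [mul_one_div, div_le_iff₀ ht0]
    nlinarith
  have hval : ∫ t in x..δ, c * (1 / t) = c * Real.log (δ / x) := by
    rw [intervalIntegral.integral_const_mul, integral_one_div]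
    intro h0
    rw [Set.uIcc_of_le hxδ] at h0
    exact absurd h0.1 (not_le.mpr hx0)
  have hlog : Real.log (δ / x) = u := by
    rw [hxdef]
    rw [show δ / (δ * Real.exp (-u)) = Real.exp u by
      rw [Real.exp_neg]; field_simp]
    exact Real.log_exp u
  rw [hval, hlog, hu] at hmono
  have : c * ((M + 1) / c) = M + 1 := by field_simp
  linarith [hmono, hbound x ⟨hx0, hxδ⟩]

lemma aux_small (h : ℝ → ℝ) (δ M c : ℝ) (hδ : 0 < δ) (hc : 0 < c)
    (hcont : ContinuousOn h (Set.Ioc 0 δ))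
    (hbound : ∀ x ∈ Set.Ioc (0:ℝ) δ, |∫ t in x..δ, h t| ≤ M) :
    ∃ x ∈ Set.Ioc (0:ℝ) δ, x * |h x| < c := by
  by_contra hcon
  push_neg at hcon
  have hne : ∀ x ∈ Set.Ioc (0:ℝ) δ, h x ≠ 0 := by
    intro x hx h0
    have := hcon x hx
    rw [h0] at this
    simp at this
    nlinarith [hx.1]
  have hsign : (∀ x ∈ Set.Ioc (0:ℝ) δ, 0 < h x) ∨ (∀ x ∈ Set.Ioc (0:ℝ) δ, h x < 0) := by
    by_contra hs
    push_neg at hs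
    obtain ⟨⟨x₁, hx₁, hx₁'⟩, ⟨x₂, hx₂, hx₂'⟩⟩ := hs
    have hsub : Set.uIcc x₁ x₂ ⊆ Set.Ioc 0 δ := by
      rw [Set.uIcc_eq_union]
      rintro t (ht | ht)
      · exact ⟨lt_of_lt_of_le hx₁.1 ht.1, le_trans ht.2 hx₂.2⟩
      · exact ⟨lt_of_lt_of_le hx₂.1 ht.1, le_trans ht.2 hx₁.2⟩
    have h0mem : (0:ℝ) ∈ Set.uIcc (h x₁) (h x₂) := by
      have h1 : h x₁ ≤ 0 := hx₁'
      have h2 : 0 < h x₂ := lt_of_le_of_ne hx₂' (Ne.symm (hne x₂ hx₂))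
      exact Set.mem_uIcc.mpr (Or.inl ⟨h1, h2.le⟩)
    obtain ⟨t, ht, ht0⟩ := intermediate_value_uIcc (hcont.mono hsub) h0mem
    exact hne t (hsub ht) ht0
  rcases hsign with hpos | hneg
  · exact aux_pos h δ M c hδ hc hcont
      (fun x hx => le_trans (le_abs_self _) (hbound x hx))
      (fun x hx => by
        have := hcon x hx
        rwa [abs_of_pos (hpos x hx)] at this)
  · exact aux_pos (fun t => -h t) δ M c hδ hc hcont.neg
      (fun x hx => by
        rw [intervalIntegral.integral_neg]
        exact le_trans (neg_le_abs _) (hbound x hx))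
      (fun x hx => by
        have := hcon x hx
        rw [abs_of_neg (hneg x hx)] at this
        simpa using this)

lemma aux_swap0 {f : ℝ → ℝ → ℝ} {p q r t : ℝ} (hpq : p ≤ q) (hrt : r ≤ t)
    (hf : ContinuousOn (fun z : ℝ × ℝ => f z.1 z.2) (Set.Icc p q ×ˢ Set.Icc r t)) :
    ∫ x in p..q, ∫ y in r..t, f x y = ∫ y in r..t, ∫ x in p..q, f x y := by
  rw [intervalIntegral.integral_of_le hpq, intervalIntegral.integral_of_le hrt]
  simp_rw [intervalIntegral.integral_of_le hpq, intervalIntegral.integral_of_le hrt]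
  have hint : Integrable (Function.uncurry f)
      ((volume.restrict (Set.Ioc p q)).prod (volume.restrict (Set.Ioc r t))) := by
    rw [Measure.prod_restrict]
    have h1 : IntegrableOn (Function.uncurry f) (Set.Icc p q ×ˢ Set.Icc r t)
        (volume.prod volume) := by
      rw [← MeasureTheory.Measure.volume_eq_prod]
      exact hf.integrableOn_compact (isCompact_Icc.prod isCompact_Icc)
    exact h1.mono_set (Set.prod_mono Set.Ioc_subset_Icc_self Set.Ioc_subset_Icc_self)
  exact MeasureTheory.integral_integral_swap hint

set_option maxHeartbeats 2000000

lemma aux_swap {f : ℝ → ℝ → ℝ} {p q r t : ℝ} (hpq : p ≤ q)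
    (hf : ContinuousOn (fun z : ℝ × ℝ => f z.1 z.2) (Set.Icc p q ×ˢ Set.uIcc r t)) :
    ∫ x in p..q, ∫ y in r..t, f x y = ∫ y in r..t, ∫ x in p..q, f x y := by
  rcases le_total r t with hrt | hrt
  · rw [Set.uIcc_of_le hrt] at hf
    exact aux_swap0 hpq hrt hf
  · rw [Set.uIcc_of_ge hrt] at hf
    have := aux_swap0 hpq hrt hf
    rw [intervalIntegral.integral_symm t r]
    simp_rw [intervalIntegral.integral_symm t r]
    rw [intervalIntegral.integral_neg, this]

/-- The partial-mass transform `v(y,s) = y^{-d} ∫₀^y w(ζ,s) ζ^{d-1} dζ` of a bounded smooth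
solution `w` of the self-similar radial Keller–Segel equation satisfies the equation
`∂_s v = Δ_{d+2} v − (y/2) ∂_y v − v + d v² + y v ∂_y v`. -/
theorem partial_mass_transform_equation
    (d : ℕ) (hd : 3 ≤ d) (a b : ℝ)
    (w : ℝ → ℝ → ℝ)
    (hsmooth : ContDiffOn ℝ (⊤ : ℕ∞) (fun p : ℝ × ℝ => w p.1 p.2) (Set.Ioi 0 ×ˢ Set.Ioo a b))
    (hbdd : ∀ M : ℝ, 0 < M → ∀ J : Set ℝ, IsCompact J → J ⊆ Set.Ioo a b →
      ∃ C : ℝ, ∀ y ∈ Set.Ioo (0 : ℝ) M, ∀ s ∈ J, |w y s| ≤ C)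
    (hPDE : ∀ y : ℝ, 0 < y → ∀ s ∈ Set.Ioo a b,
      deriv (fun τ => w y τ) s =
        deriv (deriv (fun ρ => w ρ s)) y
        + ((d : ℝ) - 1) / y * deriv (fun ρ => w ρ s) y
        + (1 / y ^ (d - 1) * (∫ ζ in (0 : ℝ)..y, w ζ s * ζ ^ (d - 1)) - y / 2) *
            deriv (fun ρ => w ρ s) y
        - w y s + w y s ^ 2)
    (v : ℝ → ℝ → ℝ)
    (hv : ∀ y s : ℝ, v y s = 1 / y ^ d * ∫ ζ in (0 : ℝ)..y, w ζ s * ζ ^ (d - 1)) :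
    ∀ y : ℝ, 0 < y → ∀ s ∈ Set.Ioo a b,
      deriv (fun τ => v y τ) s =
        deriv (deriv (fun ρ => v ρ s)) y
        + ((d : ℝ) + 1) / y * deriv (fun ρ => v ρ s) y
        - y / 2 * deriv (fun ρ => v ρ s) y
        - v y s + (d : ℝ) * v y s ^ 2
        + y * v y s * deriv (fun ρ => v ρ s) y := by
  obtain ⟨k, rfl⟩ : ∃ k, d = k + 3 := ⟨d - 3, by omega⟩
  simp only [show k + 3 - 1 = k + 2 from rfl] at hPDE hv ⊢
  intro y hy s₀ hs₀
  -- basic setup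
  set W : ℝ × ℝ → ℝ := fun p => w p.1 p.2 with hWdef
  set S : Set (ℝ × ℝ) := Set.Ioi 0 ×ˢ Set.Ioo a b with hSdef
  have hS : IsOpen S := isOpen_Ioi.prod isOpen_Ioo
  have hmemS : ∀ {x σ : ℝ}, 0 < x → σ ∈ Set.Ioo a b → (x, σ) ∈ S :=
    fun hx hσ => Set.mk_mem_prod hx hσ
  have hWc : ContinuousOn W S := hsmooth.continuousOn
  have hW' : ContinuousOn (fderiv ℝ W) S := hsmooth.continuousOn_fderiv_of_isOpen hS (by simp)
  set wy : ℝ → ℝ → ℝ := fun x σ => fderiv ℝ W (x, σ) (1, 0) with hwydef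
  set ws : ℝ → ℝ → ℝ := fun x σ => fderiv ℝ W (x, σ) (0, 1) with hwsdef
  set F : ℝ → ℝ → ℝ := fun x σ => ∫ ζ in (0:ℝ)..x, w ζ σ * ζ ^ (k+2) with hFdef
  set P : ℝ → ℝ → ℝ := fun x σ => x^(k+2) * wy x σ + F x σ * w x σ
    + (((k:ℝ)+3)/2 - 1) * F x σ - x^(k+3)/2 * w x σ with hPdef
  have hwyD : ∀ x σ, 0 < x → σ ∈ Set.Ioo a b → HasDerivAt (fun ρ => w ρ σ) (wy x σ) x := by
    intro x σ hx hσ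
    have hfd : HasFDerivAt W (fderiv ℝ W (x,σ)) (x,σ) :=
      ((hsmooth.contDiffAt (hS.mem_nhds (hmemS hx hσ))).differentiableAt (by simp)).hasFDerivAt
    have hline : HasDerivAt (fun ρ : ℝ => ((ρ, σ) : ℝ × ℝ)) ((1:ℝ), (0:ℝ)) x :=
      (hasDerivAt_id x).prodMk (hasDerivAt_const x σ)
    exact hfd.comp_hasDerivAt x hline
  have hwsD : ∀ x σ, 0 < x → σ ∈ Set.Ioo a b → HasDerivAt (fun τ => w x τ) (ws x σ) σ := by
    intro x σ hx hσ
    have hfd : HasFDerivAt W (fderiv ℝ W (x,σ)) (x,σ) :=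
      ((hsmooth.contDiffAt (hS.mem_nhds (hmemS hx hσ))).differentiableAt (by simp)).hasFDerivAt
    have hline : HasDerivAt (fun τ : ℝ => ((x, τ) : ℝ × ℝ)) ((0:ℝ), (1:ℝ)) σ :=
      (hasDerivAt_const σ x).prodMk (hasDerivAt_id σ)
    exact hfd.comp_hasDerivAt σ hline
  have hwycont : ContinuousOn (fun p : ℝ × ℝ => wy p.1 p.2) S := hW'.clm_apply continuousOn_const
  have hwscont : ContinuousOn (fun p : ℝ × ℝ => ws p.1 p.2) S := hW'.clm_apply continuousOn_const
  have hWsl : ∀ σ ∈ Set.Ioo a b, ContinuousOn (fun ζ => w ζ σ) (Set.Ioi 0) := fun σ hσ =>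
    hWc.comp (continuous_id.prodMk continuous_const).continuousOn
      (fun ζ hζ => Set.mk_mem_prod hζ hσ)
  have hwysl : ∀ σ ∈ Set.Ioo a b, ContinuousOn (fun ζ => wy ζ σ) (Set.Ioi 0) := fun σ hσ =>
    hwycont.comp (continuous_id.prodMk continuous_const).continuousOn
      (fun ζ hζ => Set.mk_mem_prod hζ hσ)
  have hwssl : ∀ σ ∈ Set.Ioo a b, ContinuousOn (fun ζ => ws ζ σ) (Set.Ioi 0) := fun σ hσ =>
    hwscont.comp (continuous_id.prodMk continuous_const).continuousOn
      (fun ζ hζ => Set.mk_mem_prod hζ hσ)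
  have hWslσ : ∀ x : ℝ, 0 < x → ContinuousOn (fun σ => w x σ) (Set.Ioo a b) := fun x hx =>
    hWc.comp (continuous_const.prodMk continuous_id).continuousOn
      (fun σ hσ => Set.mk_mem_prod hx hσ)
  have hwyslσ : ∀ x : ℝ, 0 < x → ContinuousOn (fun σ => wy x σ) (Set.Ioo a b) := fun x hx =>
    hwycont.comp (continuous_const.prodMk continuous_id).continuousOn
      (fun σ hσ => Set.mk_mem_prod hx hσ)
  have hwsslσ : ∀ x : ℝ, 0 < x → ContinuousOn (fun σ => ws x σ) (Set.Ioo a b) := fun x hx =>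
    hwscont.comp (continuous_const.prodMk continuous_id).continuousOn
      (fun σ hσ => Set.mk_mem_prod hx hσ)
  have hintg : ∀ σ ∈ Set.Ioo a b, ContinuousOn (fun ζ => w ζ σ * ζ^(k+2)) (Set.Ioi 0) :=
    fun σ hσ => (hWsl σ hσ).mul (continuous_pow _).continuousOn
  have huIccsub : ∀ s ∈ Set.Ioo a b, Set.uIcc s₀ s ⊆ Set.Ioo a b :=
    fun s hs => Set.ordConnected_Ioo.uIcc_subset hs₀ hs
  have hFint : ∀ σ ∈ Set.Ioo a b, ∀ x : ℝ, 0 < x →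
      IntervalIntegrable (fun ζ => w ζ σ * ζ^(k+2)) volume 0 x := by
    intro σ hσ x hx
    obtain ⟨C, hC⟩ := hbdd (x+1) (by linarith) {σ} isCompact_singleton
      (by simpa using hσ)
    rw [intervalIntegrable_iff, Set.uIoc_of_le hx.le]
    have hb : ∀ᵐ ζ ∂(volume.restrict (Set.Ioc 0 x)), ‖w ζ σ * ζ^(k+2)‖ ≤ C * x^(k+2) := by
      refine (ae_restrict_iff' measurableSet_Ioc).mpr (ae_of_all _ (fun ζ hζ => ?_))
      have h1 : |w ζ σ| ≤ C := hC ζ ⟨hζ.1, lt_of_le_of_lt hζ.2 (by linarith)⟩ σ rfl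
      have h2 : ζ^(k+2) ≤ x^(k+2) := pow_le_pow_left₀ hζ.1.le hζ.2 _
      have h3 : (0:ℝ) ≤ ζ^(k+2) := pow_nonneg hζ.1.le _
      rw [Real.norm_eq_abs, abs_mul, abs_of_nonneg h3]
      nlinarith [abs_nonneg (w ζ σ)]
    exact Integrable.mono' (integrable_const _)
      (((hintg σ hσ).mono Set.Ioc_subset_Ioi_self).aestronglyMeasurable measurableSet_Ioc) hb
  have hFder : ∀ σ ∈ Set.Ioo a b, ∀ x : ℝ, 0 < x →
      HasDerivAt (fun ρ => F ρ σ) (w x σ * x^(k+2)) x := by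
    intro σ hσ x hx
    exact intervalIntegral.integral_hasDerivAt_right (hFint σ hσ x hx)
      ((hintg σ hσ).stronglyMeasurableAtFilter isOpen_Ioi x hx)
      ((hintg σ hσ).continuousAt (Ioi_mem_nhds hx))
  have hPder : ∀ σ ∈ Set.Ioo a b, ∀ x : ℝ, 0 < x →
      HasDerivAt (fun ρ => P ρ σ) (ws x σ * x^(k+2)) x := by
    intro σ hσ x hx
    have hidd : HasDerivAt (fun ρ => w ρ σ) (wy x σ) x := hwyD x σ hx hσ
    have hfC : ContDiffOn ℝ (⊤ : ℕ∞) (fun ρ => w ρ σ) (Set.Ioi 0) := by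
      have hl : ContDiff ℝ (⊤ : ℕ∞) (fun ρ : ℝ => ((ρ, σ) : ℝ × ℝ)) := contDiff_id.prodMk contDiff_const
      exact hsmooth.comp hl.contDiffOn (fun ζ hζ => Set.mk_mem_prod hζ hσ)
    have hf'C : ContDiffOn ℝ (⊤ : ℕ∞) (deriv (fun ρ => w ρ σ)) (Set.Ioi 0) :=
      hfC.deriv_of_isOpen isOpen_Ioi (by simp)
    have hd2 : HasDerivAt (deriv (fun ρ => w ρ σ)) (deriv (deriv (fun ρ => w ρ σ)) x) x :=
      ((hf'C.differentiableOn (by simp)).differentiableAt (Ioi_mem_nhds hx)).hasDerivAt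
    have hwy2 : HasDerivAt (fun ρ => wy ρ σ) (deriv (deriv (fun ρ => w ρ σ)) x) x := by
      apply hd2.congr_of_eventuallyEq
      filter_upwards [Ioi_mem_nhds hx] with ρ hρ
      exact ((hwyD ρ σ hρ hσ).deriv).symm
    have hFd := hFder σ hσ x hx
    have h1 := (hasDerivAt_pow (k+2) x).mul hwy2
    have h2 := hFd.mul hidd
    have h4 := hFd.const_mul (((k:ℝ)+3)/2 - 1)
    have h3 := ((hasDerivAt_pow (k+3) x).div_const 2).mul hidd
    have htot := ((h1.add h2).add h4).sub h3
    refine htot.congr_deriv ?_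
    have hws := (hwsD x σ hx hσ).deriv
    rw [← hws, hPDE x hx σ hσ, ← hidd.deriv]
    simp only [show k + 2 - 1 = k + 1 from rfl, show k + 3 - 1 = k + 2 from rfl]
    push_cast
    have hFconst : (∫ ζ in (0:ℝ)..x, w ζ σ * ζ ^ (k+2)) = F x σ := rfl
    rw [hFconst]
    field_simp
    ring
  -- continuity of F in the time variable
  have hFcontA : ∀ x : ℝ, 0 < x → ∀ s₁ ∈ Set.Ioo a b, ContinuousAt (fun σ => F x σ) s₁ := by
    intro x hx s₁ hs₁
    obtain ⟨l, u, hl, hu, hlu, hmem1⟩ : ∃ l u, a < l ∧ u < b ∧ l < u ∧ s₁ ∈ Set.Ioo l u :=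
      ⟨(a + s₁)/2, (s₁ + b)/2, by linarith [hs₁.1], by linarith [hs₁.2],
        by linarith [hs₁.1, hs₁.2], by constructor <;> [linarith [hs₁.1]; linarith [hs₁.2]]⟩
    have hJsub : Set.Icc l u ⊆ Set.Ioo a b := fun t ht => ⟨lt_of_lt_of_le hl ht.1,
      lt_of_le_of_lt ht.2 hu⟩
    obtain ⟨C, hC⟩ := hbdd (x+1) (by linarith) (Set.Icc l u) isCompact_Icc hJsub
    apply intervalIntegral.continuousAt_of_dominated_interval
      (bound := fun _ => C * x^(k+2))
    · filter_upwards [isOpen_Ioo.mem_nhds hmem1] with σ hσ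
      rw [Set.uIoc_of_le hx.le]
      exact ((hintg σ (hJsub (Set.Ioo_subset_Icc_self hσ))).mono
        Set.Ioc_subset_Ioi_self).aestronglyMeasurable measurableSet_Ioc
    · filter_upwards [isOpen_Ioo.mem_nhds hmem1] with σ hσ
      refine ae_of_all _ (fun ζ hζ => ?_)
      rw [Set.uIoc_of_le hx.le] at hζ
      have h1 : |w ζ σ| ≤ C := hC ζ ⟨hζ.1, lt_of_le_of_lt hζ.2 (by linarith)⟩ σ
        (Set.Ioo_subset_Icc_self hσ)
      have h2 : ζ^(k+2) ≤ x^(k+2) := pow_le_pow_left₀ hζ.1.le hζ.2 _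
      have h3 : (0:ℝ) ≤ ζ^(k+2) := pow_nonneg hζ.1.le _
      rw [Real.norm_eq_abs, abs_mul, abs_of_nonneg h3]
      nlinarith [abs_nonneg (w ζ σ)]
    · exact intervalIntegrable_const
    · refine ae_of_all _ (fun ζ hζ => ?_)
      rw [Set.uIoc_of_le hx.le] at hζ
      have : ContinuousAt (fun σ => w ζ σ) s₁ := by
        have hc := hWc.continuousAt (hS.mem_nhds (hmemS hζ.1 hs₁))
        exact hc.comp ((continuous_const.prodMk continuous_id).continuousAt)
      exact this.mul continuousAt_const
  -- continuity of P in the time variable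
  have hPcont : ∀ x : ℝ, 0 < x → ContinuousOn (fun σ => P x σ) (Set.Ioo a b) := by
    intro x hx
    intro s₁ hs₁
    apply ContinuousAt.continuousWithinAt
    have c1 : ContinuousAt (fun σ => wy x σ) s₁ :=
      (hwyslσ x hx).continuousAt (isOpen_Ioo.mem_nhds hs₁)
    have c2 : ContinuousAt (fun σ => w x σ) s₁ :=
      (hWslσ x hx).continuousAt (isOpen_Ioo.mem_nhds hs₁)
    have c3 : ContinuousAt (fun σ => F x σ) s₁ := hFcontA x hx s₁ hs₁
    exact ((((continuousAt_const.mul c1).add (c3.mul c2)).add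
      (continuousAt_const.mul c3)).sub (continuousAt_const.mul c2))
  have hIpσ : ∀ x : ℝ, 0 < x → ∀ s ∈ Set.Ioo a b,
      IntervalIntegrable (fun σ => P x σ) volume s₀ s := fun x hx s hs =>
    ((hPcont x hx).mono (huIccsub s hs)).intervalIntegrable
  have hwyint : ∀ x : ℝ, 0 < x → ∀ s ∈ Set.Ioo a b,
      IntervalIntegrable (fun σ => wy x σ) volume s₀ s := fun x hx s hs =>
    ((hwyslσ x hx).mono (huIccsub s hs)).intervalIntegrable
  -- continuity of x ↦ ∫ σ in s₀..s, wy x σ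
  have huIocIcc : ∀ s : ℝ, Set.uIoc s₀ s ⊆ Set.uIcc s₀ s := fun s => Set.Ioc_subset_Icc_self
  have hhcont : ∀ s ∈ Set.Ioo a b, ∀ x : ℝ, 0 < x →
      ContinuousAt (fun x' => ∫ σ in s₀..s, wy x' σ) x := by
    intro s hs x hx
    have huIoc : Set.uIoc s₀ s ⊆ Set.Ioo a b := fun σ hσ => huIccsub s hs (huIocIcc s hσ)
    have hKsub : Set.Icc (x/2) (x+1) ×ˢ Set.uIcc s₀ s ⊆ S :=
      Set.prod_mono (fun t ht => lt_of_lt_of_le (by linarith) ht.1) (huIccsub s hs)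
    obtain ⟨C, hC⟩ := (isCompact_Icc.prod isCompact_uIcc).exists_bound_of_continuousOn
      ((hwycont.mono hKsub))
    apply intervalIntegral.continuousAt_of_dominated_interval (bound := fun _ => C)
    · filter_upwards [Ioi_mem_nhds hx] with x' hx'
      exact (((hwyslσ x' hx').mono huIoc)).aestronglyMeasurable measurableSet_uIoc
    · have hnb : Set.Ioo (x/2) (x+1) ∈ 𝓝 x := isOpen_Ioo.mem_nhds ⟨by linarith, by linarith⟩
      filter_upwards [hnb] with x' hx'
      refine ae_of_all _ (fun σ hσ => ?_)
      exact hC (x', σ) (Set.mk_mem_prod ⟨hx'.1.le, hx'.2.le⟩ (huIocIcc s hσ))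
    · exact intervalIntegrable_const
    · refine ae_of_all _ (fun σ hσ => ?_)
      have hσ' : σ ∈ Set.Ioo a b := huIoc hσ
      have hcA := hwycont.continuousAt (hS.mem_nhds (hmemS hx hσ'))
      have hline : ContinuousAt (fun x' : ℝ => ((x', σ) : ℝ × ℝ)) x :=
        (continuous_id.prodMk continuous_const).continuousAt
      exact ContinuousAt.comp (g := fun p : ℝ × ℝ => wy p.1 p.2)
        (f := fun x' : ℝ => ((x', σ) : ℝ × ℝ)) (x := x) hcA hline
  -- the key representation formula
  have hrep : ∀ s ∈ Set.Ioo a b, F y s - F y s₀ = ∫ σ in s₀..s, P y σ := by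
    intro s hs
    have huI := huIccsub s hs
    have huIoc : Set.uIoc s₀ s ⊆ Set.Ioo a b := fun σ hσ => huI (huIocIcc s hσ)
    have hQ : ∀ ε : ℝ, 0 < ε → ε ≤ y →
        (∫ σ in s₀..s, P ε σ) - (F ε s - F ε s₀)
          = (∫ σ in s₀..s, P y σ) - (F y s - F y s₀) := by
      intro ε hε hεy
      have hIccpos : ∀ ζ ∈ Set.Icc ε y, (0:ℝ) < ζ := fun ζ hζ => lt_of_lt_of_le hε hζ.1
      have hIccIoi : Set.Icc ε y ⊆ Set.Ioi 0 := fun ζ hζ => hIccpos ζ hζ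
      have huIccεy : Set.uIcc ε y = Set.Icc ε y := Set.uIcc_of_le hεy
      have huIoi : Set.uIcc ε y ⊆ Set.Ioi 0 := by rw [huIccεy]; exact hIccIoi
      have step1 : ∀ ζ ∈ Set.uIcc ε y,
          (w ζ s - w ζ s₀) * ζ^(k+2) = ∫ σ in s₀..s, ws ζ σ * ζ^(k+2) := by
        intro ζ hζ
        have hζ0 : 0 < ζ := huIoi hζ
        have hFTC : ∫ σ in s₀..s, ws ζ σ = w ζ s - w ζ s₀ :=
          intervalIntegral.integral_eq_sub_of_hasDerivAt
            (fun σ hσ => hwsD ζ σ hζ0 (huI hσ))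
            (((hwsslσ ζ hζ0).mono huI).intervalIntegrable)
        rw [intervalIntegral.integral_mul_const, hFTC]
      have step2 : ∫ ζ in ε..y, (w ζ s - w ζ s₀) * ζ^(k+2)
          = ∫ σ in s₀..s, (P y σ - P ε σ) := by
        rw [intervalIntegral.integral_congr step1]
        have hswapc : ContinuousOn (fun z : ℝ × ℝ => ws z.1 z.2 * z.1^(k+2))
            (Set.Icc ε y ×ˢ Set.uIcc s₀ s) :=
          (hwscont.mono (Set.prod_mono hIccIoi huI)).mul
            ((continuous_fst.pow _).continuousOn)
        rw [aux_swap (f := fun ζ σ => ws ζ σ * ζ^(k+2)) hεy hswapc]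
        apply intervalIntegral.integral_congr
        intro σ hσ
        have hσ' : σ ∈ Set.Ioo a b := huI hσ
        exact intervalIntegral.integral_eq_sub_of_hasDerivAt
          (fun ζ hζ => hPder σ hσ' ζ (huIoi hζ))
          ((((hwssl σ hσ').mono huIoi).mul
            ((continuous_pow _).continuousOn)).intervalIntegrable)
      have hint1 : IntervalIntegrable (fun ζ => w ζ s * ζ^(k+2)) volume ε y :=
        ((hintg s hs).mono huIoi).intervalIntegrable
      have hint2 : IntervalIntegrable (fun ζ => w ζ s₀ * ζ^(k+2)) volume ε y :=
        ((hintg s₀ hs₀).mono huIoi).intervalIntegrable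
      have e1 : ∫ ζ in ε..y, w ζ s * ζ^(k+2) = F y s - F ε s := by
        have h := intervalIntegral.integral_add_adjacent_intervals (hFint s hs ε hε) hint1
        have hFεs : F ε s = ∫ ζ in (0:ℝ)..ε, w ζ s * ζ^(k+2) := rfl
        have hFys : F y s = ∫ ζ in (0:ℝ)..y, w ζ s * ζ^(k+2) := rfl
        rw [hFεs, hFys]
        linarith [h]
      have e2 : ∫ ζ in ε..y, w ζ s₀ * ζ^(k+2) = F y s₀ - F ε s₀ := by
        have h := intervalIntegral.integral_add_adjacent_intervals (hFint s₀ hs₀ ε hε) hint2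
        have hFεs : F ε s₀ = ∫ ζ in (0:ℝ)..ε, w ζ s₀ * ζ^(k+2) := rfl
        have hFys : F y s₀ = ∫ ζ in (0:ℝ)..y, w ζ s₀ * ζ^(k+2) := rfl
        rw [hFεs, hFys]
        linarith [h]
      have hsplit : ∫ ζ in ε..y, (w ζ s - w ζ s₀) * ζ^(k+2)
          = (F y s - F ε s) - (F y s₀ - F ε s₀) := by
        have hfg : (fun ζ => (w ζ s - w ζ s₀) * ζ^(k+2))
            = fun ζ => w ζ s * ζ^(k+2) - w ζ s₀ * ζ^(k+2) := by funext ζ; ring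
        rw [hfg, intervalIntegral.integral_sub hint1 hint2, e1, e2]
      have hPsub : ∫ σ in s₀..s, (P y σ - P ε σ)
          = (∫ σ in s₀..s, P y σ) - ∫ σ in s₀..s, P ε σ :=
        intervalIntegral.integral_sub (hIpσ y hy s hs) (hIpσ ε hε s hs)
      rw [hsplit, hPsub] at step2
      linarith [step2]
    -- bound constants
    obtain ⟨C₀, hC₀⟩ := hbdd (y+1) (by linarith) (Set.uIcc s₀ s) isCompact_uIcc huI
    have hC0 : 0 ≤ C₀ := le_trans (abs_nonneg _)
      (hC₀ (y/2) ⟨by linarith, by linarith⟩ s₀ Set.left_mem_uIcc)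
    obtain ⟨K, hKdef⟩ : ∃ t : ℝ, t = C₀*C₀ + (((k:ℝ)+3)/2+1)*C₀ + C₀ := ⟨_, rfl⟩
    have hK0 : 0 ≤ K := by rw [hKdef]; nlinarith [hC0, Nat.cast_nonneg (α := ℝ) k]
    obtain ⟨D2, hD2def⟩ : ∃ t : ℝ, t = K*|s-s₀| + 2*C₀ := ⟨_, rfl⟩
    have hD20 : 0 ≤ D2 := by
      rw [hD2def]
      nlinarith [hK0, hC0, abs_nonneg (s - s₀)]
    have hFsm : ∀ ε : ℝ, 0 < ε → ε ≤ min y 1 → ∀ σ' ∈ Set.uIcc s₀ s, |F ε σ'| ≤ C₀ * ε := by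
      intro ε hε hεm σ' hσ'
      have hεy' : ε ≤ y := le_trans hεm (min_le_left _ _)
      have hε1 : ε ≤ 1 := le_trans hεm (min_le_right _ _)
      have hb : ∀ t ∈ Set.uIoc (0:ℝ) ε, ‖w t σ' * t^(k+2)‖ ≤ C₀ := by
        intro t ht
        rw [Set.uIoc_of_le hε.le] at ht
        have h1 : |w t σ'| ≤ C₀ := hC₀ t ⟨ht.1, by linarith [ht.2]⟩ σ' hσ'
        have h2 : t^(k+2) ≤ 1 := pow_le_one₀ ht.1.le (le_trans ht.2 hε1)
        have h3 : (0:ℝ) ≤ t^(k+2) := pow_nonneg ht.1.le _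
        rw [Real.norm_eq_abs, abs_mul, abs_of_nonneg h3]
        nlinarith [abs_nonneg (w t σ')]
      have h := intervalIntegral.norm_integral_le_of_norm_le_const hb
      rw [show |ε - 0| = ε by rw [sub_zero, abs_of_pos hε]] at h
      exact h
    have hM₀ : ∀ δ₂ : ℝ, 0 < δ₂ → δ₂ ≤ min y 1 → ∀ x ∈ Set.Ioc (0:ℝ) δ₂,
        |∫ t in x..δ₂, ∫ σ in s₀..s, wy t σ| ≤ 2*C₀*|s-s₀| := by
      intro δ₂ hδ₂ hδ₂m x hx
      have hxδ : x ≤ δ₂ := hx.2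
      have hIccx : Set.Icc x δ₂ ⊆ Set.Ioi 0 := fun t ht => lt_of_lt_of_le hx.1 ht.1
      rw [aux_swap (f := fun t σ => wy t σ) hxδ (hwycont.mono (Set.prod_mono hIccx huI))]
      have hinner : ∀ σ ∈ Set.uIcc s₀ s, (∫ t in x..δ₂, wy t σ) = w δ₂ σ - w x σ := by
        intro σ hσ
        have hIoi : Set.uIcc x δ₂ ⊆ Set.Ioi 0 := by rw [Set.uIcc_of_le hxδ]; exact hIccx
        exact intervalIntegral.integral_eq_sub_of_hasDerivAt
          (fun t ht => hwyD t σ (hIoi ht) (huI hσ))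
          (((hwysl σ (huI hσ)).mono hIoi).intervalIntegrable)
      rw [intervalIntegral.integral_congr hinner]
      have hb : ∀ σ ∈ Set.uIoc s₀ s, ‖w δ₂ σ - w x σ‖ ≤ 2*C₀ := by
        intro σ hσ
        have hσ' := huIocIcc s hσ
        have hδy : δ₂ ≤ y := le_trans hδ₂m (min_le_left _ _)
        have h1 : |w δ₂ σ| ≤ C₀ := hC₀ δ₂ ⟨hδ₂, by linarith⟩ σ hσ'
        have h2 : |w x σ| ≤ C₀ := hC₀ x ⟨hx.1, by linarith [hx.2]⟩ σ hσ'
        rw [Real.norm_eq_abs]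
        have := abs_sub (w δ₂ σ) (w x σ)
        linarith
      have h := intervalIntegral.norm_integral_le_of_norm_le_const hb
      exact h
    -- conclusion by contradiction
    by_contra hne
    obtain ⟨R, hRdef⟩ : ∃ t : ℝ, t = (∫ σ in s₀..s, P y σ) - (F y s - F y s₀) := ⟨_, rfl⟩
    have hR0 : R ≠ 0 := by
      intro h0
      apply hne
      rw [hRdef] at h0
      linarith
    have hRpos : 0 < |R| := abs_pos.mpr hR0
    obtain ⟨δ₂, hδ₂def⟩ : ∃ t : ℝ, t = min (min y 1) (|R| / (2*D2 + 1)) := ⟨_, rfl⟩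
    have hδ₂pos : 0 < δ₂ := by
      rw [hδ₂def]
      exact lt_min (lt_min hy one_pos) (div_pos hRpos (by linarith))
    have hδ₂m : δ₂ ≤ min y 1 := by rw [hδ₂def]; exact min_le_left _ _
    have hcontδ : ContinuousOn (fun t => ∫ σ in s₀..s, wy t σ) (Set.Ioc 0 δ₂) :=
      fun x hx => (hhcont s hs x hx.1).continuousWithinAt
    obtain ⟨ε, hεmem, hεsm⟩ := aux_small (fun t => ∫ σ in s₀..s, wy t σ) δ₂
      (2*C₀*|s-s₀|) (|R|/2) hδ₂pos (half_pos hRpos) hcontδ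
      (fun x hx => hM₀ δ₂ hδ₂pos hδ₂m x hx)
    have hε0 : 0 < ε := hεmem.1
    have hεδ : ε ≤ δ₂ := hεmem.2
    have hεy : ε ≤ y := le_trans hεδ (le_trans hδ₂m (min_le_left _ _))
    have hε1 : ε ≤ 1 := le_trans hεδ (le_trans hδ₂m (min_le_right _ _))
    have hQε := hQ ε hε0 hεy
    have hRε : R = (∫ σ in s₀..s, P ε σ) - (F ε s - F ε s₀) := by rw [hRdef, ← hQε]
    have hIw : IntervalIntegrable (fun σ => ε^(k+2) * wy ε σ) volume s₀ s :=
      (hwyint ε hε0 s hs).const_mul _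
    have hsub2 : ∫ σ in s₀..s, (P ε σ - ε^(k+2) * wy ε σ)
        = (∫ σ in s₀..s, P ε σ) - ∫ σ in s₀..s, ε^(k+2) * wy ε σ :=
      intervalIntegral.integral_sub (hIpσ ε hε0 s hs) hIw
    have hB : ∫ σ in s₀..s, ε^(k+2) * wy ε σ = ε^(k+2) * ∫ σ in s₀..s, wy ε σ :=
      intervalIntegral.integral_const_mul _ _
    have hA : |∫ σ in s₀..s, (P ε σ - ε^(k+2) * wy ε σ)| ≤ K * ε * |s - s₀| := by
      have hb : ∀ σ ∈ Set.uIoc s₀ s, ‖P ε σ - ε^(k+2) * wy ε σ‖ ≤ K * ε := by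
        intro σ hσ
        have hσ' : σ ∈ Set.uIcc s₀ s := huIocIcc s hσ
        have hF1 : |F ε σ| ≤ C₀ * ε := hFsm ε hε0 (le_trans hεδ hδ₂m) σ hσ'
        have hw1 : |w ε σ| ≤ C₀ := hC₀ ε ⟨hε0, by linarith⟩ σ hσ'
        have hεk : ε^(k+3) ≤ ε := by
          calc ε^(k+3) ≤ ε^1 := pow_le_pow_of_le_one hε0.le hε1 (by omega)
          _ = ε := pow_one ε
        have hPρ : P ε σ - ε^(k+2) * wy ε σ
            = F ε σ * w ε σ + (((k:ℝ)+3)/2 - 1) * F ε σ - ε^(k+3)/2 * w ε σ := by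
          simp only [hPdef]
          ring
        have t1 : |F ε σ * w ε σ| ≤ (C₀*ε)*C₀ := by
          rw [abs_mul]
          exact mul_le_mul hF1 hw1 (abs_nonneg _) (mul_nonneg hC0 hε0.le)
        have t2 : |(((k:ℝ)+3)/2 - 1) * F ε σ| ≤ (((k:ℝ)+3)/2+1) * (C₀*ε) := by
          rw [abs_mul]
          apply mul_le_mul _ hF1 (abs_nonneg _) (by positivity)
          rw [abs_of_nonneg (by nlinarith [Nat.cast_nonneg (α := ℝ) k] : (0:ℝ) ≤ ((k:ℝ)+3)/2 - 1)]
          linarith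
        have t3 : |ε^(k+3)/2 * w ε σ| ≤ ε * C₀ := by
          rw [abs_mul]
          have habs : |ε^(k+3)/2| ≤ ε := by
            rw [abs_of_nonneg (div_nonneg (pow_nonneg hε0.le _) two_pos.le)]
            linarith
          exact mul_le_mul habs hw1 (abs_nonneg _) hε0.le
        rw [Real.norm_eq_abs, hPρ]
        have htri : |F ε σ * w ε σ + (((k:ℝ)+3)/2 - 1) * F ε σ - ε^(k+3)/2 * w ε σ|
            ≤ |F ε σ * w ε σ + (((k:ℝ)+3)/2 - 1) * F ε σ| + |ε^(k+3)/2 * w ε σ| :=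
          abs_sub _ _
        have htri2 : |F ε σ * w ε σ + (((k:ℝ)+3)/2 - 1) * F ε σ|
            ≤ |F ε σ * w ε σ| + |(((k:ℝ)+3)/2 - 1) * F ε σ| := abs_add_le _ _
        rw [hKdef]
        nlinarith
      have h := intervalIntegral.norm_integral_le_of_norm_le_const hb
      exact h
    -- final contradiction
    have hFs : |F ε s| ≤ C₀ * ε := hFsm ε hε0 (le_trans hεδ hδ₂m) s Set.right_mem_uIcc
    have hFs₀ : |F ε s₀| ≤ C₀ * ε := hFsm ε hε0 (le_trans hεδ hδ₂m) s₀ Set.left_mem_uIcc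
    have hBb : |ε^(k+2) * ∫ σ in s₀..s, wy ε σ| < |R|/2 := by
      rw [abs_mul, abs_of_nonneg (pow_nonneg hε0.le _)]
      calc ε^(k+2) * |∫ σ in s₀..s, wy ε σ|
          = ε^(k+1) * (ε * |∫ σ in s₀..s, wy ε σ|) := by ring
        _ ≤ 1 * (ε * |∫ σ in s₀..s, wy ε σ|) := by
            exact mul_le_mul_of_nonneg_right (pow_le_one₀ hε0.le hε1)
              (mul_nonneg hε0.le (abs_nonneg _))
        _ = ε * |∫ σ in s₀..s, wy ε σ| := one_mul _
        _ < |R|/2 := hεsm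
    have hRdecomp : R = (∫ σ in s₀..s, (P ε σ - ε^(k+2) * wy ε σ))
        + (ε^(k+2) * ∫ σ in s₀..s, wy ε σ) - F ε s + F ε s₀ := by
      rw [hRε, hsub2, hB]
      ring
    have htri : |R| ≤ |∫ σ in s₀..s, (P ε σ - ε^(k+2) * wy ε σ)|
        + |ε^(k+2) * ∫ σ in s₀..s, wy ε σ| + |F ε s| + |F ε s₀| := by
      rw [hRdecomp]
      have h1 := abs_sub ((∫ σ in s₀..s, (P ε σ - ε^(k+2) * wy ε σ))
        + (ε^(k+2) * ∫ σ in s₀..s, wy ε σ)) (F ε s - F ε s₀)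
      have h2 := abs_add_le (∫ σ in s₀..s, (P ε σ - ε^(k+2) * wy ε σ))
        (ε^(k+2) * ∫ σ in s₀..s, wy ε σ)
      have h3 := abs_sub (F ε s) (F ε s₀)
      have heq : (∫ σ in s₀..s, (P ε σ - ε^(k+2) * wy ε σ))
          + (ε^(k+2) * ∫ σ in s₀..s, wy ε σ) - F ε s + F ε s₀
          = ((∫ σ in s₀..s, (P ε σ - ε^(k+2) * wy ε σ))
          + (ε^(k+2) * ∫ σ in s₀..s, wy ε σ)) - (F ε s - F ε s₀) := by ring
      rw [heq]
      linarith
    have hDε : K * ε * |s - s₀| + 2 * (C₀ * ε) ≤ D2 * ε := by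
      rw [hD2def]
      have : K * ε * |s-s₀| = K * |s-s₀| * ε := by ring
      nlinarith
    have hD2δ : D2 * ε < |R|/2 := by
      have hεR : ε ≤ |R| / (2*D2 + 1) := le_trans (hδ₂def ▸ hεδ) (min_le_right _ _)
      have h1 : D2 * ε ≤ D2 * (|R| / (2*D2 + 1)) := mul_le_mul_of_nonneg_left hεR hD20
      have h2 : D2 * (|R| / (2*D2 + 1)) < |R|/2 := by
        have h3 : (0:ℝ) < 2*D2 + 1 := by linarith
        rw [← mul_div_assoc, div_lt_div_iff₀ h3 two_pos]
        nlinarith [hRpos]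
      linarith
    linarith [htri, hA, hBb, hFs, hFs₀, hDε, hD2δ]
  -- time derivative of v at (y, s₀)
  have hFds : HasDerivAt (fun s => F y s) (P y s₀) s₀ := by
    have hH : HasDerivAt (fun s => F y s₀ + ∫ σ in s₀..s, P y σ) (P y s₀) s₀ := by
      have h0 := intervalIntegral.integral_hasDerivAt_right
        (hIpσ y hy s₀ hs₀)
        ((hPcont y hy).stronglyMeasurableAtFilter isOpen_Ioo s₀ hs₀)
        ((hPcont y hy).continuousAt (isOpen_Ioo.mem_nhds hs₀))
      exact h0.const_add _
    apply hH.congr_of_eventuallyEq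
    filter_upwards [isOpen_Ioo.mem_nhds hs₀] with s hs
    have := hrep s hs
    linarith
  have hvds : HasDerivAt (fun τ => v y τ) (1/y^(k+3) * P y s₀) s₀ := by
    have h := hFds.const_mul (1/y^(k+3))
    exact h.congr_of_eventuallyEq (Eventually.of_forall fun τ => by
      show v y τ = 1/y^(k+3) * F y τ
      exact hv y τ)
  -- spatial derivatives of v
  have hvd : ∀ ρ : ℝ, 0 < ρ →
      HasDerivAt (fun x => v x s₀) ((w ρ s₀ - ((k:ℝ)+3) * v ρ s₀)/ρ) ρ := by
    intro ρ hρ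
    have hρ0 : ρ ≠ 0 := hρ.ne'
    have hFd := hFder s₀ hs₀ ρ hρ
    have h1 := ((hasDerivAt_pow (k+3) ρ).inv (pow_ne_zero _ hρ0)).mul hFd
    have h2 : HasDerivAt (fun x => v x s₀)
        (-(((k:ℝ)+3) * ρ^(k+2)) / (ρ^(k+3))^2 * F ρ s₀ + (ρ^(k+3))⁻¹ * (w ρ s₀ * ρ^(k+2))) ρ := by
      have h3 : HasDerivAt (fun x => (x^(k+3))⁻¹ * F x s₀)
          (-(((k:ℝ)+3) * ρ^(k+2)) / (ρ^(k+3))^2 * F ρ s₀ + (ρ^(k+3))⁻¹ * (w ρ s₀ * ρ^(k+2))) ρ := by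
        refine h1.congr_deriv ?_
        simp only [Pi.inv_apply]
        push_cast
        ring
      exact h3.congr_of_eventuallyEq (Eventually.of_forall fun x => by
        show v x s₀ = (x^(k+3))⁻¹ * F x s₀
        rw [hv x s₀, one_div])
    convert h2 using 1
    rw [hv ρ s₀]
    field_simp
    ring
  have hderivfun : deriv (fun ρ => v ρ s₀)
      =ᶠ[𝓝 y] fun ρ => (w ρ s₀ - ((k:ℝ)+3) * v ρ s₀)/ρ := by
    filter_upwards [Ioi_mem_nhds hy] with ρ hρ
    exact (hvd ρ hρ).deriv
  have hg : HasDerivAt (fun ρ => (w ρ s₀ - ((k:ℝ)+3) * v ρ s₀)/ρ)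
      (((wy y s₀ - ((k:ℝ)+3) * ((w y s₀ - ((k:ℝ)+3) * v y s₀)/y)) * y
        - (w y s₀ - ((k:ℝ)+3) * v y s₀) * 1) / y^2) y :=
    ((hwyD y s₀ hy hs₀).sub ((hvd y hy).const_mul _)).div (hasDerivAt_id y) hy.ne'
  rw [hvds.deriv, hderivfun.deriv_eq, hg.deriv, (hvd y hy).deriv, hv y s₀]
  simp only [hPdef, hFdef]
  push_cast
  field_simp
  ring
end

section
/- Fix an integer d ≥ 3 and let α > 0. For n ∈ ℕ let H_n be the polynomial defined by the recurrence A_{n,n} = 1, A_{n,k-1} = -(2k(2k+d-2)/(n-k+1))·A_{n,k}, and set φ_{2n}(y) = H_n(2α y²). Then for all natural numbers n ≠ m, the weighted orthogonality relation ∫₀^∞ φ_{2n}(y)·φ_{2m}(y)·y^{d-1}·e^{-α y²/2} dy = 0 holds. -/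
/-!
Put `c = d/2` and write `(x)_j` for the rising factorial. The recurrence forces
`A n k = (-4)^(n-k) * (n choose k) * (c + k)_(n-k)`, and the Gaussian moments are
`∫₀^∞ (2αy²)^j y^(d-1) e^(-αy²/2) dy = 4^j (c)_j * M` with `M` the moment of order zero.
Hence it suffices that `φ_{2n}` annihilates `(2αy²)^l` for `l < n`, i.e. that
`∑ₖ A n k 4^(k+l) (c)_(k+l) = 0`. Since `(c)_(k+l) = (c)_k (c + k)_l` and
`(c)_k (c + k)_(n-k) = (c)_n`, this sum is `4^n (c)_n` times the `n`-th forward difference at `c`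
of the polynomial `x ↦ (x)_l` of degree `l < n`, which vanishes.
-/

open Finset MeasureTheory Polynomial

theorem sum_range_alternating_choose_mul_eval_eq_zero {R : Type*} [CommRing R] {P : R[X]}
    {n : ℕ} (hP : P.natDegree < n) (x : R) :
    ∑ k ∈ range (n + 1), (-1) ^ (n - k) * (n.choose k : R) * P.eval (x + k) = 0 := by
  have h := congrFun (fwdDiff_iter_eq_zero_of_degree_lt hP) x
  rw [fwdDiff_iter_eq_sum_shift] at h
  simpa [zsmul_eq_mul] using h

theorem ascPochhammer_eval_add_nat {R : Type*} [CommSemiring R] (c : R) (k l : ℕ) :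
    (ascPochhammer R (k + l)).eval c =
      (ascPochhammer R k).eval c * (ascPochhammer R l).eval (c + k) := by
  rw [← ascPochhammer_mul]
  simp [eval_comp]

theorem Real.Gamma_add_nat_eq_mul_ascPochhammer {s : ℝ} (hs : ∀ k : ℕ, s ≠ -k) (j : ℕ) :
    Real.Gamma (s + j) = Real.Gamma s * (ascPochhammer ℝ j).eval s := by
  induction j with
  | zero => simp
  | succ j ih =>
    have hsj : s + j ≠ 0 := fun h => hs j (by linarith)
    rw [Nat.cast_succ, ← add_assoc, Real.Gamma_add_one hsj, ih, ascPochhammer_succ_eval]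
    ring

theorem integrableOn_pow_mul_exp_neg_mul_sq {b : ℝ} (hb : 0 < b) (p : ℕ) :
    IntegrableOn (fun y : ℝ => y ^ p * Real.exp (-b * y ^ 2)) (Set.Ioi 0) := by
  simpa using
    integrableOn_rpow_mul_exp_neg_mul_sq hb (s := p) (neg_one_lt_zero.trans_le p.cast_nonneg)

theorem integral_pow_mul_exp_neg_mul_sq_Ioi {b : ℝ} (hb : 0 < b) (p : ℕ) :
    ∫ y in Set.Ioi 0, y ^ p * Real.exp (-b * y ^ 2) =
      b ^ (-((p : ℝ) + 1) / 2) * (1 / 2) * Real.Gamma (((p : ℝ) + 1) / 2) := by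
  simp_rw [← Real.rpow_two, ← Real.rpow_natCast]
  exact integral_rpow_mul_exp_neg_mul_rpow two_pos (neg_one_lt_zero.trans_le p.cast_nonneg) hb

theorem integral_pow_add_two_mul_mul_exp_neg_mul_sq {b : ℝ} (hb : 0 < b) (p j : ℕ) :
    ∫ y in Set.Ioi 0, y ^ (p + 2 * j) * Real.exp (-b * y ^ 2) =
      (ascPochhammer ℝ j).eval (((p : ℝ) + 1) / 2) / b ^ j *
        ∫ y in Set.Ioi 0, y ^ p * Real.exp (-b * y ^ 2) := by
  have hs : (((p + 2 * j : ℕ) : ℝ) + 1) / 2 = ((p : ℝ) + 1) / 2 + j := by push_cast; ring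
  have hb' : b ^ (-(((p + 2 * j : ℕ) : ℝ) + 1) / 2) = b ^ (-((p : ℝ) + 1) / 2) / b ^ j := by
    rw [← Real.rpow_natCast, ← Real.rpow_sub hb]
    congr 1
    push_cast
    ring
  have hpos : ∀ k : ℕ, ((p : ℝ) + 1) / 2 ≠ -k := fun k => by
    have : (0 : ℝ) < ((p : ℝ) + 1) / 2 := by positivity
    linarith [k.cast_nonneg (α := ℝ)]
  rw [integral_pow_mul_exp_neg_mul_sq_Ioi hb, integral_pow_mul_exp_neg_mul_sq_Ioi hb, hs, hb',
    Real.Gamma_add_nat_eq_mul_ascPochhammer hpos]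
  ring

theorem integral_sum_mul_sum_mul_pow_mul_exp_neg_mul_sq {b : ℝ} (hb : 0 < b) (t : ℝ)
    (p N K : ℕ) (a a' : ℕ → ℝ) :
    ∫ y in Set.Ioi 0, (∑ k ∈ range N, a k * (t * y ^ 2) ^ k) *
        (∑ l ∈ range K, a' l * (t * y ^ 2) ^ l) * y ^ p * Real.exp (-b * y ^ 2) =
      (∫ y in Set.Ioi 0, y ^ p * Real.exp (-b * y ^ 2)) * ∑ l ∈ range K, a' l *
        ∑ k ∈ range N, a k * (t / b) ^ (k + l) *
          (ascPochhammer ℝ (k + l)).eval (((p : ℝ) + 1) / 2) := by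
  have hexpand : ∀ y : ℝ, (∑ k ∈ range N, a k * (t * y ^ 2) ^ k) *
      (∑ l ∈ range K, a' l * (t * y ^ 2) ^ l) * y ^ p * Real.exp (-b * y ^ 2) =
        ∑ l ∈ range K, ∑ k ∈ range N, a' l * a k * t ^ (k + l) *
          (y ^ (p + 2 * (k + l)) * Real.exp (-b * y ^ 2)) := fun y => by
    simp only [sum_mul, mul_sum]
    exact sum_congr rfl fun l _ => sum_congr rfl fun k _ => by ring
  have hint : ∀ (c : ℝ) (j : ℕ), IntegrableOn
      (fun y : ℝ => c * (y ^ (p + 2 * j) * Real.exp (-b * y ^ 2))) (Set.Ioi 0) :=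
    fun c j => (integrableOn_pow_mul_exp_neg_mul_sq hb _).const_mul c
  simp_rw [hexpand]
  rw [integral_finsetSum _ fun l _ => integrable_finsetSum _ fun k _ => hint _ _, mul_sum]
  refine sum_congr rfl fun l _ => ?_
  rw [integral_finsetSum _ fun k _ => hint _ _, mul_sum, mul_sum]
  refine sum_congr rfl fun k _ => ?_
  rw [integral_const_mul, integral_pow_add_two_mul_mul_exp_neg_mul_sq hb, div_pow]
  ring

noncomputable def kummerCoeff {R : Type*} [CommRing R] (c : R) (n k : ℕ) : R :=
  (-4) ^ (n - k) * n.choose k * (ascPochhammer R (n - k)).eval (c + k)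

theorem kummerCoeff_self {R : Type*} [CommRing R] (c : R) (n : ℕ) : kummerCoeff c n n = 1 := by
  simp [kummerCoeff]

theorem kummerCoeff_eq_mul_kummerCoeff_succ (c : ℝ) {n j : ℕ} (hj : j < n) :
    kummerCoeff c n j = -(4 * (j + 1) * (c + j) / (n - j)) * kummerCoeff c n (j + 1) := by
  obtain ⟨m, hm⟩ : ∃ m, n - j = m + 1 := ⟨n - j - 1, by omega⟩
  have hchoose : (n.choose (j + 1) : ℝ) * (j + 1) = n.choose j * (n - j) := by
    have h := congrArg (Nat.cast : ℕ → ℝ) (Nat.choose_succ_right_eq n j)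
    push_cast [Nat.cast_sub hj.le] at h
    exact h
  have hnj : (n : ℝ) - j ≠ 0 := sub_ne_zero.mpr (by exact_mod_cast hj.ne')
  simp only [kummerCoeff, hm, show n - (j + 1) = m by omega, ascPochhammer_succ_left, eval_mul,
    eval_X, eval_comp, eval_add, eval_one, Nat.cast_succ, add_assoc]
  field_simp
  linear_combination (4 * (-4) ^ m * (c + j) * (ascPochhammer ℝ m).eval (c + (j + 1))) * hchoose

theorem eq_kummerCoeff_of_recurrence {d n : ℕ} {a : ℕ → ℝ} (hn : a n = 1)
    (hrec : ∀ k : ℕ, 1 ≤ k → k ≤ n →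
      a (k - 1) =
        -(2 * (k : ℝ) * (2 * (k : ℝ) + (d : ℝ) - 2) / ((n : ℝ) - (k : ℝ) + 1)) * a k)
    {k : ℕ} (hk : k ≤ n) : a k = kummerCoeff ((d : ℝ) / 2) n k := by
  induction hk using Nat.decreasingInduction with
  | self => rw [hn, kummerCoeff_self]
  | of_succ j hj ih =>
    rw [kummerCoeff_eq_mul_kummerCoeff_succ _ hj, ← ih, ← Nat.add_sub_cancel j 1,
      hrec (j + 1) (by omega) hj, Nat.add_sub_cancel]
    push_cast
    ring

theorem sum_kummerCoeff_mul_ascPochhammer_eq_zero {R : Type*} [CommRing R] [IsDomain R] (c : R)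
    {n l : ℕ} (hl : l < n) :
    ∑ k ∈ range (n + 1), kummerCoeff c n k * 4 ^ (k + l) * (ascPochhammer R (k + l)).eval c =
      0 := by
  have hterm : ∀ k ∈ range (n + 1),
      kummerCoeff c n k * 4 ^ (k + l) * (ascPochhammer R (k + l)).eval c =
        4 ^ (n + l) * (ascPochhammer R n).eval c *
          ((-1) ^ (n - k) * n.choose k * (ascPochhammer R l).eval (c + k)) := by
    intro k hk
    obtain ⟨i, rfl⟩ := Nat.exists_eq_add_of_le (Nat.lt_succ_iff.mp (mem_range.mp hk))
    rw [kummerCoeff, ascPochhammer_eval_add_nat c k l, ascPochhammer_eval_add_nat c k i,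
      Nat.add_sub_cancel_left, show (-4 : R) ^ i = (-1) ^ i * 4 ^ i by rw [← mul_pow]; norm_num]
    ring
  rw [sum_congr rfl hterm, ← mul_sum, sum_range_alternating_choose_mul_eval_eq_zero
    ((ascPochhammer_natDegree R l).trans_lt hl), mul_zero]

/-- Weighted orthogonality of the eigenfunctions `φ_{2n}(y) = H_n(2αy²)` on `(0,∞)`
with respect to the Gaussian weight `y^{d-1} e^{-αy²/2}`. -/
theorem kummer_eigenfunctions_orthogonal
    (d : ℕ) (hd : 3 ≤ d) (α : ℝ) (hα : 0 < α)
    (A : ℕ → ℕ → ℝ)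
    (hAn : ∀ n : ℕ, A n n = 1)
    (hArec : ∀ n k : ℕ, 1 ≤ k → k ≤ n →
      A n (k - 1) = -(2 * (k : ℝ) * (2 * (k : ℝ) + (d : ℝ) - 2) / ((n : ℝ) - (k : ℝ) + 1)) * A n k)
    (φ : ℕ → ℝ → ℝ)
    (hφ : ∀ n : ℕ, ∀ y : ℝ,
      φ n y = ∑ k ∈ Finset.range (n + 1), A n k * (2 * α * y ^ 2) ^ k) :
    ∀ n m : ℕ, n ≠ m →
      ∫ y in Set.Ioi (0 : ℝ),
        φ n y * φ m y * y ^ (d - 1) * Real.exp (-α * y ^ 2 / 2) = 0 := by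
  suffices h : ∀ n m : ℕ, m < n →
      ∫ y in Set.Ioi (0 : ℝ), φ n y * φ m y * y ^ (d - 1) * Real.exp (-α * y ^ 2 / 2) = 0 by
    intro n m hnm
    rcases hnm.lt_or_gt with hlt | hlt
    · simpa only [mul_comm (φ m _) (φ n _)] using h m n hlt
    · exact h n m hlt
  intro n m hmn
  have hc : (((d - 1 : ℕ) : ℝ) + 1) / 2 = (d : ℝ) / 2 := by
    push_cast [Nat.cast_sub (by omega : 1 ≤ d)]
    ring
  have h4 : 2 * α / (α / 2) = 4 := by field_simp; norm_num
  simp_rw [hφ, neg_mul, neg_div, ← div_mul_eq_mul_div, ← neg_mul]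
  rw [integral_sum_mul_sum_mul_pow_mul_exp_neg_mul_sq (half_pos hα), hc, h4]
  refine mul_eq_zero_of_right _ (sum_eq_zero fun l hl => mul_eq_zero_of_right _ ?_)
  rw [← sum_kummerCoeff_mul_ascPochhammer_eq_zero _
    ((Nat.lt_succ_iff.mp (mem_range.mp hl)).trans_lt hmn)]
  exact sum_congr rfl fun k hk => by
    rw [eq_kummerCoeff_of_recurrence (hAn n) (hArec n) (Nat.lt_succ_iff.mp (mem_range.mp hk))]
end

section
/- Fix an integer d ≥ 3. For n ∈ ℕ let H_n(z) = ∑_{k=0}^n A_{n,k} z^k be the polynomial defined by the recurrence A_{n,n} = 1, A_{n,k-1} = -(2k(2k+d-2)/(n-k+1))·A_{n,k}. Then for every n ∈ ℕ and all z ∈ ℝ, the monomial inversion identity z^n = ∑_{k=0}^n |A_{n,k}|·H_k(z) holds. -/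
/-!
Writing `P_k(j) = ∏_{i<j} c(k+1+i)` with `c(m) = 2m(2m+d-2)`, the recurrence solves to
`A_{k+j,k} = (-1)^j P_k(j) / j!`, so `|A_{k+j,k}| = P_k(j) / j!` because `c ≥ 0`. Substituting `H_k`
and exchanging the sums, the coefficient of `z^j` in `∑_k |A_{n,k}| H_k(z)` is
`∑_{k=j}^n |A_{n,k}| A_{k,j} = P_j(n-j) ∑_{m=0}^{n-j} (-1)^m / ((n-j-m)! m!)`,
which is `P_j(n-j) (1 - 1)^{n-j} / (n-j)! = δ_{jn}`.
-/

open Finset Nat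

theorem sum_range_neg_one_pow_div_factorial_mul_factorial (N : ℕ) :
    ∑ m ∈ range (N + 1), (-1 : ℝ) ^ m / ((N - m)! * m !) = if N = 0 then 1 else 0 := by
  have hchoose : ∀ m ∈ range (N + 1),
      (-1 : ℝ) ^ m / ((N - m)! * m !) = (-1 : ℝ) ^ m * N.choose m / N ! := by
    intro m hm
    rw [Nat.cast_choose ℝ (Nat.lt_succ_iff.mp (mem_range.mp hm))]
    field_simp
  have halt : ∑ m ∈ range (N + 1), (-1 : ℝ) ^ m * N.choose m = if N = 0 then 1 else 0 := by
    exact_mod_cast Int.alternating_sum_range_choose (n := N)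
  rw [sum_congr rfl hchoose, ← sum_div, halt]
  split_ifs with hN <;> simp [hN]

section Recurrence

variable (c : ℕ → ℝ) {A : ℕ → ℕ → ℝ}

theorem eq_neg_one_pow_mul_prod_div_factorial_of_recurrence (hAn : ∀ n, A n n = 1)
    (hArec : ∀ n k : ℕ, 1 ≤ k → k ≤ n → A n (k - 1) = -(c k / ((n : ℝ) - k + 1)) * A n k)
    (j k : ℕ) :
    A (k + j) k = (-1) ^ j * (∏ i ∈ range j, c (k + 1 + i)) / j ! := by
  induction j generalizing k with
  | zero => simp [hAn]
  | succ j ih =>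
    have hrec := hArec (k + (j + 1)) (k + 1) (by omega) (by omega)
    rw [Nat.add_sub_cancel, show k + (j + 1) = k + 1 + j by omega, ih (k + 1)] at hrec
    rw [show k + (j + 1) = k + 1 + j by omega, hrec, prod_range_succ', factorial_succ]
    have hshift : ∏ i ∈ range j, c (k + 1 + (i + 1)) = ∏ i ∈ range j, c (k + 1 + 1 + i) :=
      prod_congr rfl fun i _ => by rw [show k + 1 + (i + 1) = k + 1 + 1 + i by omega]
    rw [hshift, add_zero]
    push_cast
    field_simp
    ring

theorem abs_eq_prod_div_factorial_of_recurrence (hc : ∀ m, 1 ≤ m → 0 ≤ c m)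
    (hAn : ∀ n, A n n = 1)
    (hArec : ∀ n k : ℕ, 1 ≤ k → k ≤ n → A n (k - 1) = -(c k / ((n : ℝ) - k + 1)) * A n k)
    (j k : ℕ) :
    |A (k + j) k| = (∏ i ∈ range j, c (k + 1 + i)) / j ! := by
  rw [eq_neg_one_pow_mul_prod_div_factorial_of_recurrence c hAn hArec, abs_div, abs_mul,
    abs_pow, abs_neg, abs_one, one_pow, one_mul, Nat.abs_cast,
    abs_of_nonneg (prod_nonneg fun i _ => hc _ (by omega))]

theorem sum_prod_div_factorial_mul_alternating (j N : ℕ) :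
    ∑ m ∈ range (N + 1), (∏ i ∈ range (N - m), c (j + m + 1 + i)) / (N - m)! *
      ((-1) ^ m * (∏ i ∈ range m, c (j + 1 + i)) / m !) = if N = 0 then 1 else 0 := by
  have hsplit : ∀ m ∈ range (N + 1),
      (∏ i ∈ range (N - m), c (j + m + 1 + i)) / (N - m)! *
        ((-1) ^ m * (∏ i ∈ range m, c (j + 1 + i)) / m !) =
      (∏ i ∈ range N, c (j + 1 + i)) * ((-1 : ℝ) ^ m / ((N - m)! * m !)) := by
    intro m hm
    have hmN : m + (N - m) = N := by have := mem_range.mp hm; omega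
    rw [← hmN, prod_range_add, Nat.add_sub_cancel_left]
    simp only [show ∀ i, j + 1 + (m + i) = j + m + 1 + i by omega]
    ring
  rw [sum_congr rfl hsplit, ← mul_sum, sum_range_neg_one_pow_div_factorial_mul_factorial]
  split_ifs with hN <;> simp [hN]

theorem sum_abs_mul_eq_ite_of_recurrence (hc : ∀ m, 1 ≤ m → 0 ≤ c m)
    (hAn : ∀ n, A n n = 1)
    (hArec : ∀ n k : ℕ, 1 ≤ k → k ≤ n → A n (k - 1) = -(c k / ((n : ℝ) - k + 1)) * A n k)
    {j n : ℕ} (hjn : j ≤ n) :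
    ∑ k ∈ Ico j (n + 1), |A n k| * A k j = if j = n then 1 else 0 := by
  rw [sum_Ico_eq_sum_range, show n + 1 - j = n - j + 1 by omega]
  have hterm : ∀ m ∈ range (n - j + 1), |A n (j + m)| * A (j + m) j =
      (∏ i ∈ range (n - j - m), c (j + m + 1 + i)) / (n - j - m)! *
        ((-1) ^ m * (∏ i ∈ range m, c (j + 1 + i)) / m !) := by
    intro m hm
    have hn : n = j + m + (n - j - m) := by have := mem_range.mp hm; omega
    conv_lhs => rw [hn]
    rw [abs_eq_prod_div_factorial_of_recurrence c hc hAn hArec,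
      eq_neg_one_pow_mul_prod_div_factorial_of_recurrence c hAn hArec]
  rw [sum_congr rfl hterm, sum_prod_div_factorial_mul_alternating]
  congr 1
  exact propext (by omega)

end Recurrence

theorem pow_eq_sum_mul_sum_of_sum_mul_eq_ite (A B : ℕ → ℕ → ℝ) (n : ℕ)
    (hBA : ∀ j ≤ n, ∑ k ∈ Ico j (n + 1), B n k * A k j = if j = n then 1 else 0) (z : ℝ) :
    z ^ n = ∑ k ∈ range (n + 1), B n k * ∑ j ∈ range (k + 1), A k j * z ^ j := by
  simp only [mul_sum, ← mul_assoc]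
  rw [sum_comm' (t' := range (n + 1)) (s' := fun j => Ico j (n + 1))
    (by intro k j; simp only [mem_range, mem_Ico]; omega)]
  simp only [← sum_mul]
  rw [sum_congr rfl fun j hj => by rw [hBA j (by have := mem_range.mp hj; omega)]]
  simp

theorem kummer_monomial_inversion_general
    (d : ℕ)
    (A : ℕ → ℕ → ℝ)
    (hAn : ∀ n : ℕ, A n n = 1)
    (hArec : ∀ n k : ℕ, 1 ≤ k → k ≤ n →
      A n (k - 1) = -(2 * (k : ℝ) * (2 * (k : ℝ) + (d : ℝ) - 2) / ((n : ℝ) - (k : ℝ) + 1)) * A n k)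
    (H : ℕ → ℝ → ℝ)
    (hH : ∀ n : ℕ, ∀ z : ℝ, H n z = ∑ k ∈ Finset.range (n + 1), A n k * z ^ k) :
    ∀ n : ℕ, ∀ z : ℝ, z ^ n = ∑ k ∈ Finset.range (n + 1), |A n k| * H k z := by
  intro n z
  have hc : ∀ m : ℕ, 1 ≤ m → 0 ≤ 2 * (m : ℝ) * (2 * m + d - 2) := by
    intro m hm
    have : (1 : ℝ) ≤ m := by exact_mod_cast hm
    have : (0 : ℝ) ≤ d := d.cast_nonneg
    exact mul_nonneg (by linarith) (by linarith)
  simp only [hH]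
  exact pow_eq_sum_mul_sum_of_sum_mul_eq_ite A (fun n k => |A n k|) n
    (fun j hj => sum_abs_mul_eq_ite_of_recurrence _ hc hAn hArec hj) z

/-- Monomial inversion identity: `z^n = ∑_{k=0}^n |A_{n,k}| H_k(z)` for the Kummer-type
polynomials `H_k(z) = ∑_{j=0}^k A_{k,j} z^j`. -/
theorem kummer_monomial_inversion
    (d : ℕ) (hd : 3 ≤ d)
    (A : ℕ → ℕ → ℝ)
    (hAn : ∀ n : ℕ, A n n = 1)
    (hArec : ∀ n k : ℕ, 1 ≤ k → k ≤ n →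
      A n (k - 1) = -(2 * (k : ℝ) * (2 * (k : ℝ) + (d : ℝ) - 2) / ((n : ℝ) - (k : ℝ) + 1)) * A n k)
    (H : ℕ → ℝ → ℝ)
    (hH : ∀ n : ℕ, ∀ z : ℝ, H n z = ∑ k ∈ Finset.range (n + 1), A n k * z ^ k) :
    ∀ n : ℕ, ∀ z : ℝ, z ^ n = ∑ k ∈ Finset.range (n + 1), |A n k| * H k z :=
  kummer_monomial_inversion_general d A hAn hArec H hH
end

section
/- Fix an integer d ≥ 3 and let α > 0. For m ∈ ℕ let H_m be the polynomial defined by the recurrence A_{m,m} = 1, A_{m,k-1} = -(2k(2k+d-2)/(m-k+1))·A_{m,k}, and set φ_{2m}(y) = H_m(2α y²). Then for all natural numbers n and m with m ≥ n + 1, one has ∫₀^∞ y^{2n}·φ_{2m}(y)·y^{d-1}·e^{-α y²/2} dy = 0. -/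
/-!
Solving the recurrence gives `A_{m,k} = (-4)^{m-k} C(m,k) Γ(m + d/2) / Γ(k + d/2)`, so `H_m` is a
rescaled Laguerre polynomial `L_m^{(d/2-1)}`. Expanding `φ_{2m}`, the integral becomes a sum of
Gaussian moments `∫₀^∞ y^{2(n+k)+d-1} e^{-αy²/2} dy ∝ 4^{-k} Γ(n + k + d/2)`, and after cancelling
`Γ(k + d/2)` against the coefficients it is proportional to
`∑_k (-1)^{m-k} C(m,k) P(d/2 + k)` with `P(x) = x (x+1) ⋯ (x+n-1)`. This is the `m`-th forward
difference of a polynomial of degree `n < m`, hence zero.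
-/

open Finset MeasureTheory

open Polynomial fwdDiff in
theorem Polynomial.sum_range_choose_mul_eval_add_eq_zero {R : Type*} [CommRing R] {P : R[X]}
    {m : ℕ} (hP : P.natDegree < m) (x : R) :
    ∑ k ∈ range (m + 1), (-1) ^ (m - k) * m.choose k * P.eval (x + k) = 0 := by
  have h := congr_fun (P.fwdDiff_iter_eq_zero_of_degree_lt hP) x
  rw [fwdDiff_iter_eq_sum_shift] at h
  simpa [zsmul_eq_mul] using h

namespace Real

open _root_.Polynomial in
theorem Gamma_add_nat_eq_mul_eval_ascPochhammer {x : ℝ} (hx : 0 < x) (n : ℕ) :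
    Gamma (x + n) = Gamma x * (ascPochhammer ℝ n).eval x := by
  induction n with
  | zero => simp
  | succ n ih =>
    rw [Nat.cast_succ, ← add_assoc, Gamma_add_one (by positivity), ih, ascPochhammer_succ_right]
    simp only [eval_mul, eval_add, eval_X, eval_natCast]
    ring

theorem integrableOn_pow_mul_exp_neg_mul_sq {b : ℝ} (hb : 0 < b) (q : ℕ) :
    IntegrableOn (fun y : ℝ => y ^ q * exp (-b * y ^ 2)) (Set.Ioi 0) := by
  simpa only [rpow_natCast] using
    integrableOn_rpow_mul_exp_neg_mul_sq hb (s := q) (by linarith [q.cast_nonneg (α := ℝ)])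

theorem integral_Ioi_pow_mul_exp_neg_mul_sq {b : ℝ} (hb : 0 < b) (q : ℕ) :
    ∫ y in Set.Ioi 0, y ^ q * exp (-b * y ^ 2) =
      Gamma ((q + 1) / 2) / (2 * b ^ (((q : ℝ) + 1) / 2)) := by
  have h := integral_rpow_mul_exp_neg_mul_rpow (q := q) two_pos
    (by linarith [q.cast_nonneg (α := ℝ)]) hb
  simp only [rpow_natCast, rpow_two] at h
  rw [h, neg_div, rpow_neg hb.le]
  ring

theorem integral_Ioi_pow_mul_sum_sq_pow_mul_exp_neg_mul_sq {b : ℝ} (hb : 0 < b) (β : ℝ)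
    (c : ℕ → ℝ) (p m : ℕ) :
    ∫ y in Set.Ioi 0, y ^ p * (∑ k ∈ range (m + 1), c k * (β * y ^ 2) ^ k) * exp (-b * y ^ 2) =
      (∑ k ∈ range (m + 1), c k * (β / b) ^ k * Gamma (((p : ℝ) + 1) / 2 + k)) /
        (2 * b ^ (((p : ℝ) + 1) / 2)) := by
  have hexpand : ∀ y : ℝ,
      y ^ p * (∑ k ∈ range (m + 1), c k * (β * y ^ 2) ^ k) * exp (-b * y ^ 2) =
        ∑ k ∈ range (m + 1), c k * β ^ k * (y ^ (p + 2 * k) * exp (-b * y ^ 2)) := by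
    intro y
    rw [mul_sum, sum_mul]
    refine sum_congr rfl fun k _ => ?_
    rw [mul_pow, pow_add, pow_mul']
    ring
  simp_rw [hexpand]
  rw [integral_finsetSum _ fun k _ => (integrableOn_pow_mul_exp_neg_mul_sq hb _).const_mul _,
    sum_div]
  refine sum_congr rfl fun k _ => ?_
  have hexp : (((p + 2 * k : ℕ) : ℝ) + 1) / 2 = ((p : ℝ) + 1) / 2 + k := by push_cast; ring
  rw [integral_const_mul, integral_Ioi_pow_mul_exp_neg_mul_sq hb, hexp, rpow_add hb,
    rpow_natCast, div_pow]
  field_simp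

end Real

/-- The coefficient of `z^k` in `(-4)^m m! L_m^{(d/2-1)}(z/4)`, `L` the generalized Laguerre
polynomial. -/
noncomputable def scaledLaguerreCoeff (d : ℝ) (m k : ℕ) : ℝ :=
  (-4) ^ (m - k) * m.choose k * (Real.Gamma (m + d / 2) / Real.Gamma (k + d / 2))

theorem eq_scaledLaguerreCoeff_of_recurrence {d : ℝ} (hd : 0 < d) {m : ℕ} {a : ℕ → ℝ}
    (ha : a m = 1)
    (hrec : ∀ k : ℕ, 1 ≤ k → k ≤ m →
      a (k - 1) = -(2 * (k : ℝ) * (2 * (k : ℝ) + d - 2) / ((m : ℝ) - (k : ℝ) + 1)) * a k)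
    {k : ℕ} (hk : k ≤ m) :
    a k = scaledLaguerreCoeff d m k := by
  unfold scaledLaguerreCoeff
  induction hk using Nat.decreasingInduction with
  | self => simp [ha, (Real.Gamma_pos_of_pos (by positivity : (0 : ℝ) < m + d / 2)).ne']
  | of_succ k hkm ih =>
    obtain ⟨j, rfl⟩ := Nat.exists_eq_add_of_lt hkm
    have hchoose :
        ((k + j + 1).choose (k + 1) : ℝ) * (k + 1) = (k + j + 1).choose k * (j + 1) := by
      exact_mod_cast (Nat.choose_succ_right_eq (k + j + 1) k).trans (by congr 1; omega)
    have hGamma : Real.Gamma (k + 1 + d / 2) = (k + d / 2) * Real.Gamma (k + d / 2) := by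
      rw [add_right_comm, Real.Gamma_add_one (by positivity)]
    have hstep := hrec (k + 1) le_add_self hkm
    rw [Nat.add_sub_cancel, ih] at hstep
    rw [hstep, show k + j + 1 - (k + 1) = j by omega, show k + j + 1 - k = j + 1 by omega]
    push_cast
    rw [hGamma]
    field_simp
    linear_combination -4 * (-4) ^ j * (2 * k + d) * hchoose

theorem sum_scaledLaguerreCoeff_mul_four_pow_mul_Gamma_eq_zero {d : ℝ} (hd : 0 < d) {m n : ℕ}
    (hnm : n < m) :
    ∑ k ∈ range (m + 1), scaledLaguerreCoeff d m k * 4 ^ k * Real.Gamma (n + d / 2 + k) = 0 := by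
  have hterm : ∀ k ∈ range (m + 1),
      scaledLaguerreCoeff d m k * 4 ^ k * Real.Gamma (n + d / 2 + k) =
        4 ^ m * Real.Gamma (m + d / 2) *
          ((-1) ^ (m - k) * m.choose k * (ascPochhammer ℝ n).eval (d / 2 + k)) := by
    intro k hk
    have hkm : k ≤ m := mem_range_succ_iff.mp hk
    have hsign : (-4 : ℝ) ^ (m - k) * 4 ^ k = (-1) ^ (m - k) * 4 ^ m := by
      rw [show (-4 : ℝ) = -1 * 4 by norm_num, mul_pow, mul_assoc, pow_sub_mul_pow _ hkm]
    rw [scaledLaguerreCoeff, show (n : ℝ) + d / 2 + k = d / 2 + k + n by ring,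
      Real.Gamma_add_nat_eq_mul_eval_ascPochhammer (by positivity), add_comm (k : ℝ)]
    -- opaque to `field_simp`, which would otherwise rewrite the argument `d / 2 + k`
    set P := (ascPochhammer ℝ n).eval (d / 2 + k)
    field_simp
    linear_combination (m.choose k : ℝ) * P * hsign
  rw [sum_congr rfl hterm, ← mul_sum, Polynomial.sum_range_choose_mul_eval_add_eq_zero
    (by rwa [ascPochhammer_natDegree]), mul_zero]

/-- Orthogonality of the monomial `y^{2n}` to the eigenfunctions `φ_{2m}(y) = H_m(2αy²)`
with `m ≥ n+1`, with respect to the Gaussian weight `y^{d-1} e^{-αy²/2}` on `(0,∞)`. -/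
theorem monomial_orthogonal_to_higher_eigenfunctions
    (d : ℕ) (hd : 3 ≤ d) (α : ℝ) (hα : 0 < α)
    (A : ℕ → ℕ → ℝ)
    (hAm : ∀ m : ℕ, A m m = 1)
    (hArec : ∀ m k : ℕ, 1 ≤ k → k ≤ m →
      A m (k - 1) = -(2 * (k : ℝ) * (2 * (k : ℝ) + (d : ℝ) - 2) / ((m : ℝ) - (k : ℝ) + 1)) * A m k)
    (φ : ℕ → ℝ → ℝ)
    (hφ : ∀ m : ℕ, ∀ y : ℝ,
      φ m y = ∑ k ∈ Finset.range (m + 1), A m k * (2 * α * y ^ 2) ^ k) :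
    ∀ n m : ℕ, n + 1 ≤ m →
      ∫ y in Set.Ioi (0 : ℝ),
        y ^ (2 * n) * φ m y * y ^ (d - 1) * Real.exp (-α * y ^ 2 / 2) = 0 := by
  intro n m hnm
  have hintegrand : ∀ y : ℝ, y ^ (2 * n) * φ m y * y ^ (d - 1) * Real.exp (-α * y ^ 2 / 2) =
      y ^ (2 * n + (d - 1)) * (∑ k ∈ range (m + 1), A m k * (2 * α * y ^ 2) ^ k) *
        Real.exp (-(α / 2) * y ^ 2) := by
    intro y
    rw [hφ, pow_add, show -α * y ^ 2 / 2 = -(α / 2) * y ^ 2 by ring]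
    ring
  have hA : ∀ k ∈ range (m + 1), A m k = scaledLaguerreCoeff d m k := fun k hk =>
    eq_scaledLaguerreCoeff_of_recurrence (by positivity) (hAm m) (hArec m)
      (mem_range_succ_iff.mp hk)
  have hexp : (((2 * n + (d - 1) : ℕ) : ℝ) + 1) / 2 = n + d / 2 := by
    push_cast [Nat.cast_sub (by omega : 1 ≤ d)]
    ring
  have hratio : 2 * α / (α / 2) = 4 := by field_simp; norm_num
  simp_rw [hintegrand]
  rw [Real.integral_Ioi_pow_mul_sum_sq_pow_mul_exp_neg_mul_sq (by positivity), hexp, hratio,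
    sum_congr rfl fun k hk => by rw [hA k hk],
    sum_scaledLaguerreCoeff_mul_four_pow_mul_Gamma_eq_zero (by positivity) hnm, zero_div]
end

section
/- Let H₃(z) = z³ − 42z² + 420z − 840 and let P(z) = (5/3)z⁶ − (416/3)z⁵ + (12628/3)z⁴ − 57792z³ + 364560z² − 940800z + 705600. Then ∫₀^∞ P(z)·H₃(z)·z^{1/2}·e^{-z/4} dz = 39360 · ∫₀^∞ H₃(z)²·z^{1/2}·e^{-z/4} dz. In other words, the coefficient of H₃ in the orthogonal expansion of P with respect to the weight z^{1/2}e^{-z/4} on (0,∞) equals B₃ = 39360. -/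
/-!
Both integrands are polynomials times the weight `z^{1/2} e^{-z/4}`, whose moments are
`∫₀^∞ z^k z^{1/2} e^{-z/4} dz = 4^{k+3/2} Γ(k + 3/2) = 4 · 2^k · (2k+1)‼ · √π`.
Expanding `P · H₃` and `H₃²` into monomials therefore turns the claim into an identity
between two finite rational sums (both sides carry the common factor `4√π`).
-/

open MeasureTheory Set Real
open scoped Nat

section Moments

variable {s r : ℝ}

theorem integrableOn_pow_mul_rpow_mul_exp_neg_mul (hs : -1 < s) (hr : 0 < r) (k : ℕ) :
    IntegrableOn (fun z : ℝ => z ^ k * z ^ s * exp (-(r * z))) (Ioi 0) := by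
  have hks : -1 < (k : ℝ) + s := by have := k.cast_nonneg (α := ℝ); linarith
  refine (integrableOn_rpow_mul_exp_neg_mul_rpow hks one_pos hr).congr_fun
    (fun z hz => ?_) measurableSet_Ioi
  simp only [rpow_add hz, rpow_natCast, rpow_one, neg_mul]

theorem integral_pow_mul_rpow_mul_exp_neg_mul (hs : -1 < s) (hr : 0 < r) (k : ℕ) :
    ∫ z in Ioi 0, z ^ k * z ^ s * exp (-(r * z)) = (1 / r) ^ (k + s + 1) * Gamma (k + s + 1) := by
  have hks : 0 < (k : ℝ) + s + 1 := by have := k.cast_nonneg (α := ℝ); linarith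
  rw [← integral_rpow_mul_exp_neg_mul_Ioi hks hr]
  refine setIntegral_congr_fun measurableSet_Ioi (fun z hz => ?_)
  rw [add_sub_cancel_right, rpow_add hz, rpow_natCast]

theorem integral_sum_pow_mul_rpow_mul_exp_neg_mul (hs : -1 < s) (hr : 0 < r) {n : ℕ}
    (c : Fin n → ℝ) :
    ∫ z in Ioi 0, (∑ k, c k * z ^ (k : ℕ)) * z ^ s * exp (-(r * z))
      = ∑ k, c k * ∫ z in Ioi 0, z ^ (k : ℕ) * z ^ s * exp (-(r * z)) := by
  simp_rw [Finset.sum_mul, mul_assoc]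
  rw [integral_finsetSum _ fun k _ => ?_]
  · simp_rw [integral_const_mul]
  · simpa only [mul_assoc] using
      (integrableOn_pow_mul_rpow_mul_exp_neg_mul hs hr k).const_mul (c k)

end Moments

theorem integral_pow_mul_sqrt_mul_exp_neg_div_four (k : ℕ) :
    ∫ z in Ioi 0, z ^ k * z ^ (1 / 2 : ℝ) * exp (-(1 / 4 * z))
      = 4 * 2 ^ k * (2 * k + 1)‼ * √π := by
  have hsqrt : √(4 : ℝ) = 2 := by rw [show (4 : ℝ) = 2 ^ 2 by norm_num, sqrt_sq zero_le_two]
  have h4 : (4 : ℝ) ^ ((k : ℝ) + 1 + 1 / 2) = 2 ^ k * 2 ^ k * 8 := by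
    rw [rpow_add four_pos, rpow_add_one four_pos.ne', rpow_natCast, ← sqrt_eq_rpow, hsqrt,
      ← mul_pow]
    ring
  rw [integral_pow_mul_rpow_mul_exp_neg_mul (by norm_num) (by norm_num),
    show (k : ℝ) + 1 / 2 + 1 = k + 1 + 1 / 2 by ring, Gamma_nat_add_one_add_half,
    one_div_one_div, h4]
  field_simp
  ring

theorem integral_sum_pow_mul_sqrt_mul_exp_neg_div_four {n : ℕ} (c : Fin n → ℝ) :
    ∫ z in Ioi 0, (∑ k, c k * z ^ (k : ℕ)) * z ^ (1 / 2 : ℝ) * exp (-z / 4)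
      = 4 * √π * ∑ k, c k * 2 ^ (k : ℕ) * (2 * k + 1 : ℕ)‼ := by
  have hexp (z : ℝ) : -z / 4 = -(1 / 4 * z) := by ring
  simp_rw [hexp, integral_sum_pow_mul_rpow_mul_exp_neg_mul (by norm_num : (-1 : ℝ) < 1 / 2)
      (by norm_num : (0 : ℝ) < 1 / 4), integral_pow_mul_sqrt_mul_exp_neg_div_four,
    Finset.mul_sum]
  exact Finset.sum_congr rfl fun k _ => by ring

/-- The coefficient of `H₃` in the orthogonal expansion of the nonlinear interaction
polynomial `P` with respect to the weight `z^{1/2} e^{-z/4}` on `(0,∞)` equals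
`B₃ = 39360`. -/
theorem projection_constant_B3
    (H₃ P : ℝ → ℝ)
    (hH : ∀ z : ℝ, H₃ z = z ^ 3 - 42 * z ^ 2 + 420 * z - 840)
    (hP : ∀ z : ℝ, P z = 5 / 3 * z ^ 6 - 416 / 3 * z ^ 5 + 12628 / 3 * z ^ 4
      - 57792 * z ^ 3 + 364560 * z ^ 2 - 940800 * z + 705600) :
    ∫ z in Set.Ioi (0 : ℝ), P z * H₃ z * z ^ ((1 : ℝ) / 2) * Real.exp (-z / 4)
      = 39360 * ∫ z in Set.Ioi (0 : ℝ), H₃ z ^ 2 * z ^ ((1 : ℝ) / 2) * Real.exp (-z / 4) := by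
  have hPH : ∀ z, P z * H₃ z = ∑ k : Fin 10, ![-592704000, 1086624000, -731001600, 241879680,
      -44060800, 4676224, -294224, 32200 / 3, -626 / 3, 5 / 3] k * z ^ (k : ℕ) := fun z => by
    simp only [hP, hH, Fin.sum_univ_succ, Fin.sum_univ_zero, Matrix.cons_val_zero,
      Matrix.cons_val_succ, Fin.val_zero, Fin.val_succ]
    ring
  have hHH : ∀ z, H₃ z ^ 2 = ∑ k : Fin 7,
      ![705600, -705600, 246960, -36960, 2604, -84, 1] k * z ^ (k : ℕ) := fun z => by
    simp only [hH, Fin.sum_univ_succ, Fin.sum_univ_zero, Matrix.cons_val_zero,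
      Matrix.cons_val_succ, Fin.val_zero, Fin.val_succ]
    ring
  simp_rw [hPH, hHH, integral_sum_pow_mul_sqrt_mul_exp_neg_div_four]
  simp only [Fin.sum_univ_succ, Fin.sum_univ_zero, Matrix.cons_val_zero, Matrix.cons_val_succ,
    Fin.val_zero, Fin.val_succ, Nat.doubleFactorial]
  ring
end

section
/- Let H₂(z) = z² − 24z + 96 and let P(z) = (3/2)z⁴ − 70z³ + 1056z² − 5760z + 9216. Then ∫₀^∞ P(z)·H₂(z)·z·e^{-z/4} dz = 576 · ∫₀^∞ H₂(z)²·z·e^{-z/4} dz. In other words, the coefficient of H₂ in the orthogonal expansion of P with respect to the weight z·e^{-z/4} on (0,∞) equals B₂ = 576. -/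
open MeasureTheory Real Set
open scoped Nat

/-!
Against the weight `z e^{-z/4}` both integrands are polynomials times `e^{-z/4}`, and the moments
are `∫₀^∞ z^k e^{-cz} dz = k!/c^{k+1}` (a Gamma integral); expanding the two polynomials reduces
the identity to comparing two finite sums of rationals.
-/

theorem integral_pow_mul_exp_neg_mul_Ioi (k : ℕ) {c : ℝ} (hc : 0 < c) :
    ∫ x in Ioi (0 : ℝ), x ^ k * exp (-(c * x)) = k ! / c ^ (k + 1) := by
  have hGamma := integral_rpow_mul_exp_neg_mul_Ioi (by positivity : (0 : ℝ) < k + 1) hc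
  simp_rw [add_sub_cancel_right, rpow_natCast] at hGamma
  rw [hGamma, Gamma_nat_eq_factorial, ← Nat.cast_succ, rpow_natCast, one_div, inv_pow,
    inv_mul_eq_div]

theorem integrableOn_pow_mul_exp_neg_mul_Ioi (k : ℕ) {c : ℝ} (hc : 0 < c) :
    IntegrableOn (fun x : ℝ ↦ x ^ k * exp (-(c * x))) (Ioi 0) :=
  .of_integral_ne_zero (by rw [integral_pow_mul_exp_neg_mul_Ioi k hc]; positivity)

theorem integral_sum_pow_mul_exp_neg_mul_Ioi {N : ℕ} (a : Fin N → ℝ) {c : ℝ} (hc : 0 < c) :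
    ∫ x in Ioi (0 : ℝ), (∑ i, a i * x ^ (i : ℕ)) * exp (-(c * x))
      = ∑ i, a i * ((i : ℕ) ! / c ^ ((i : ℕ) + 1)) := by
  simp_rw [Finset.sum_mul, mul_assoc]
  rw [integral_finsetSum _
    fun i _ ↦ (integrableOn_pow_mul_exp_neg_mul_Ioi i.val hc).const_mul (a i)]
  simp_rw [integral_const_mul, integral_pow_mul_exp_neg_mul_Ioi _ hc]

/-- The coefficient of `H₂` in the orthogonal expansion of the nonlinear interaction
polynomial `P` with respect to the weight `z·e^{-z/4}` on `(0,∞)` equals `B₂ = 576`. -/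
theorem projection_constant_B2
    (H₂ P : ℝ → ℝ)
    (hH : ∀ z : ℝ, H₂ z = z ^ 2 - 24 * z + 96)
    (hP : ∀ z : ℝ, P z = 3 / 2 * z ^ 4 - 70 * z ^ 3 + 1056 * z ^ 2 - 5760 * z + 9216) :
    ∫ z in Set.Ioi (0 : ℝ), P z * H₂ z * z * Real.exp (-z / 4)
      = 576 * ∫ z in Set.Ioi (0 : ℝ), H₂ z ^ 2 * z * Real.exp (-z / 4) := by
  have hPH : ∀ z, P z * H₂ z * z * exp (-z / 4) = (∑ i : Fin 8,
      ![0, 884736, -774144, 248832, -37824, 2880, -106, 3 / 2] i * z ^ (i : ℕ)) *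
        exp (-(1 / 4 * z)) := by
    intro z
    rw [hP, hH, show -z / 4 = -(1 / 4 * z) by ring]
    simp only [Fin.sum_univ_succ, Fin.sum_univ_zero, Matrix.cons_val_zero,
      Matrix.cons_val_succ, Fin.val_zero, Fin.val_succ]
    ring
  have hHH : ∀ z, H₂ z ^ 2 * z * exp (-z / 4) =
      (∑ i : Fin 6, ![0, 9216, -4608, 768, -48, 1] i * z ^ (i : ℕ)) * exp (-(1 / 4 * z)) := by
    intro z
    rw [hH, show -z / 4 = -(1 / 4 * z) by ring]
    simp only [Fin.sum_univ_succ, Fin.sum_univ_zero, Matrix.cons_val_zero,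
      Matrix.cons_val_succ, Fin.val_zero, Fin.val_succ]
    ring
  simp_rw [hPH, hHH, integral_sum_pow_mul_exp_neg_mul_Ioi _ (by norm_num : (0 : ℝ) < 1 / 4)]
  norm_num [Fin.sum_univ_succ, Nat.factorial]
end

section
/- Fix d ∈ {3,4}, set ℓ = d/(d-2), and let c > 0. Then: (a) for every ξ ≥ 0 there is a unique number Q(ξ) ∈ (0, 1/d] with c·ξ^{2ℓ} = (1 − d·Q(ξ))/Q(ξ)^ℓ; (b) Q(0) = 1/d; (c) the resulting function Q is differentiable on (0,∞) with Q'(ξ) < 0 for every ξ > 0 (so Q is strictly decreasing and 0 < Q(ξ) < 1/d for ξ > 0); (d) Q(ξ) → 0 as ξ → ∞; and (e) Q solves the profile ODE d·Q(ξ)·(Q(ξ) − 1/d) + (Q(ξ) − 1/2)·ξ·Q'(ξ) = 0 for all ξ > 0. -/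
/-!
On `(0, 1/d]` the map `F q = (1 - d q) / q ^ ℓ` is a strictly decreasing bijection onto `[0, ∞)`,
so `Q ξ = F⁻¹ (c ξ ^ (2ℓ))` exists, is unique, strictly decreasing and tends to `0`. Being monotone
with an interval as image, `Q` is continuous on `(0, ∞)`; it is then differentiable because it is
locally inverted by `q ↦ (F q / c) ^ (1 / (2ℓ))`, whose derivative does not vanish. Differentiating
`c ξ ^ (2ℓ) Q ^ ℓ + d Q = 1` and using `ℓ (d - 2) = d` gives the ODE, and the ODE forces `Q' < 0`
since `Q < 1/d < 1/2`.
-/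

open Filter Set Topology

noncomputable def profileFun (d : ℝ) (ℓ : ℕ) (q : ℝ) : ℝ := (1 - d * q) / q ^ ℓ

variable {d c : ℝ} {ℓ : ℕ}

theorem profileFun_nonneg (hd : 0 < d) {q : ℝ} (hq : q ∈ Ioc 0 (1 / d)) :
    0 ≤ profileFun d ℓ q :=
  div_nonneg (sub_nonneg.2 ((le_div_iff₀' hd).1 hq.2)) (pow_nonneg hq.1.le ℓ)

theorem profileFun_strictAntiOn (hd : 0 < d) : StrictAntiOn (profileFun d ℓ) (Ioc 0 (1 / d)) := by
  rintro a ⟨ha, -⟩ b ⟨-, hb⟩ hab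
  have hdb : 0 ≤ 1 - d * b := sub_nonneg.2 ((le_div_iff₀' hd).1 hb)
  calc (1 - d * b) / b ^ ℓ ≤ (1 - d * b) / a ^ ℓ := by gcongr
    _ < (1 - d * a) / a ^ ℓ := by gcongr

theorem profileFun_surjOn (hd : 0 < d) (hℓ : ℓ ≠ 0) :
    SurjOn (profileFun d ℓ) (Ioc 0 (1 / d)) (Ici 0) := by
  intro y (hy : 0 ≤ y)
  -- a root of `y q^ℓ + d q - 1` in `(0, 1/d]` solves `profileFun d ℓ q = y`
  let p : ℝ → ℝ := fun q => y * q ^ ℓ + d * q - 1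
  have hp0 : p 0 = -1 := by simp [p, hℓ]
  have hp1 : 0 ≤ p (1 / d) := by
    have : 0 ≤ y * (1 / d) ^ ℓ := by positivity
    simp only [p, mul_one_div_cancel hd.ne']
    linarith
  obtain ⟨q, ⟨hq0, hqd⟩, hpq⟩ := intermediate_value_Icc (by positivity) (by fun_prop)
    (show (0 : ℝ) ∈ Icc (p 0) (p (1 / d)) from ⟨by rw [hp0]; norm_num, hp1⟩)
  have hq : 0 < q := hq0.lt_of_ne (by rintro rfl; rw [hp0] at hpq; norm_num at hpq)
  refine ⟨q, ⟨hq, hqd⟩, ?_⟩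
  rw [profileFun, div_eq_iff (pow_pos hq ℓ).ne']
  linarith [show p q = 0 from hpq]

theorem existsUnique_profileFun_eq (hd : 0 < d) (hℓ : ℓ ≠ 0) {y : ℝ} (hy : 0 ≤ y) :
    ∃! q, q ∈ Ioc 0 (1 / d) ∧ y = profileFun d ℓ q := by
  obtain ⟨q, hq, rfl⟩ := profileFun_surjOn hd hℓ hy
  exact ⟨q, ⟨hq, rfl⟩, fun q' ⟨hq', h⟩ => (profileFun_strictAntiOn hd).injOn hq' hq h.symm⟩

theorem hasDerivAt_profileFun {q : ℝ} (hq : q ≠ 0) :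
    HasDerivAt (profileFun d ℓ) (-(d * q + ℓ * (1 - d * q)) / q ^ (ℓ + 1)) q := by
  refine (((hasDerivAt_id' q).const_mul d).const_sub 1 |>.div (hasDerivAt_pow ℓ q)
    (pow_ne_zero ℓ hq)).congr_deriv ?_
  cases ℓ with
  | zero => field_simp; ring
  | succ k => simp only [Nat.add_sub_cancel]; field_simp; push_cast; ring

def IsProfile (d : ℝ) (ℓ : ℕ) (c : ℝ) (Q : ℝ → ℝ) : Prop :=
  ∀ ξ, 0 ≤ ξ → Q ξ ∈ Ioc 0 (1 / d) ∧ c * ξ ^ (2 * ℓ) = profileFun d ℓ (Q ξ)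

namespace IsProfile

variable {Q : ℝ → ℝ} {ξ : ℝ}

theorem pos (h : IsProfile d ℓ c Q) (hξ : 0 ≤ ξ) : 0 < Q ξ := (h ξ hξ).1.1

theorem mul_add_eq_one (h : IsProfile d ℓ c Q) (hξ : 0 ≤ ξ) :
    c * ξ ^ (2 * ℓ) * Q ξ ^ ℓ + d * Q ξ = 1 := by
  have := (h ξ hξ).2
  rw [profileFun, eq_div_iff (pow_pos (h.pos hξ) ℓ).ne'] at this
  linarith

theorem zero (h : IsProfile d ℓ c Q) (hd : 0 < d) (hℓ : ℓ ≠ 0) : Q 0 = 1 / d := by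
  have hQ0 := h.mul_add_eq_one le_rfl
  rw [zero_pow (by omega), mul_zero, zero_mul, zero_add] at hQ0
  rw [eq_div_iff hd.ne']
  linarith

theorem strictAntiOn (h : IsProfile d ℓ c Q) (hd : 0 < d) (hc : 0 < c) (hℓ : ℓ ≠ 0) :
    StrictAntiOn Q (Ici 0) := by
  intro a (ha : 0 ≤ a) b (hb : 0 ≤ b) hab
  rw [← (profileFun_strictAntiOn hd).lt_iff_gt (h a ha).1 (h b hb).1, ← (h a ha).2, ← (h b hb).2]
  gcongr

theorem lt_one_div (h : IsProfile d ℓ c Q) (hd : 0 < d) (hc : 0 < c) (hℓ : ℓ ≠ 0) (hξ : 0 < ξ) :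
    Q ξ < 1 / d :=
  h.zero hd hℓ ▸ h.strictAntiOn hd hc hℓ self_mem_Ici hξ.le hξ

theorem surjOn (h : IsProfile d ℓ c Q) (hd : 0 < d) (hc : 0 < c) (hℓ : ℓ ≠ 0) :
    SurjOn Q (Ici 0) (Ioc 0 (1 / d)) := by
  intro q hq
  have hFq : 0 ≤ profileFun d ℓ q / c := div_nonneg (profileFun_nonneg hd hq) hc.le
  set ξ := (profileFun d ℓ q / c) ^ (((2 * ℓ : ℕ) : ℝ)⁻¹)
  have hξ : 0 ≤ ξ := by positivity
  refine ⟨ξ, hξ, (profileFun_strictAntiOn (ℓ := ℓ) hd).injOn (h ξ hξ).1 hq ?_⟩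
  rw [← (h ξ hξ).2, Real.rpow_inv_natCast_pow hFq (by omega), mul_div_cancel₀ _ hc.ne']

theorem continuousAt (h : IsProfile d ℓ c Q) (hd : 0 < d) (hc : 0 < c) (hℓ : ℓ ≠ 0)
    (hξ : 0 < ξ) : ContinuousAt Q ξ := by
  have hanti := h.strictAntiOn hd hc hℓ
  have hmono : MonotoneOn (fun x => -Q x) (Ioi 0) := fun a ha b hb hab =>
    neg_le_neg (hanti.antitoneOn (mem_Ici_of_Ioi ha) (mem_Ici_of_Ioi hb) hab)
  -- `-Q` maps `(0, ∞)` onto `(-1/d, 0)`, a neighbourhood of `-Q ξ`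
  have himage : Ioo (-(1 / d)) 0 ⊆ (fun x => -Q x) '' Ioi 0 := by
    intro y ⟨hy1, hy2⟩
    obtain ⟨x, hx, hQx⟩ := h.surjOn hd hc hℓ ⟨neg_pos.mpr hy2, by linarith⟩
    have hx0 : x ≠ 0 := by rintro rfl; rw [h.zero hd hℓ] at hQx; linarith
    exact ⟨x, lt_of_le_of_ne hx (Ne.symm hx0), by simp [hQx]⟩
  have hmem : -Q ξ ∈ Ioo (-(1 / d)) 0 :=
    ⟨neg_lt_neg (h.lt_one_div hd hc hℓ hξ), neg_neg_of_pos (h.pos hξ.le)⟩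
  have hneg := continuousAt_of_monotoneOn_of_image_mem_nhds hmono (Ioi_mem_nhds hξ)
    (mem_of_superset (isOpen_Ioo.mem_nhds hmem) himage)
  simpa only [Pi.neg_def, neg_neg] using hneg.neg

theorem tendsto_atTop_zero (h : IsProfile d ℓ c Q) (hd : 0 < d) (hc : 0 < c) (hℓ : ℓ ≠ 0) :
    Tendsto Q atTop (𝓝 0) := by
  refine tendsto_order.2 ⟨fun a ha => ?_, fun a ha => ?_⟩
  · filter_upwards [eventually_ge_atTop 0] with x hx using ha.trans (h.pos hx)
  · obtain ⟨x₀, hx₀, hQx₀⟩ := h.surjOn hd hc hℓ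
      ⟨lt_min ha (by positivity), min_le_right a (1 / d)⟩
    filter_upwards [eventually_gt_atTop x₀] with x hx
    calc Q x < Q x₀ := h.strictAntiOn hd hc hℓ hx₀ (hx₀.trans hx.le) hx
      _ = min a (1 / d) := hQx₀
      _ ≤ a := min_le_left a (1 / d)

theorem differentiableAt (h : IsProfile d ℓ c Q) (hd : 0 < d) (hc : 0 < c) (hℓ : ℓ ≠ 0)
    (hξ : 0 < ξ) : DifferentiableAt ℝ Q ξ := by
  have hQ := h.pos hξ.le
  -- on `(0, ∞)`, `Q` is inverted by `q ↦ (profileFun d ℓ q / c) ^ (1 / (2ℓ))`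
  have hinv : ∀ᶠ x in 𝓝 ξ, (profileFun d ℓ (Q x) / c) ^ ((2 * ℓ : ℕ) : ℝ)⁻¹ = x := by
    filter_upwards [Ioi_mem_nhds hξ] with x hx
    rw [← (h x hx.le).2, mul_div_cancel_left₀ _ hc.ne',
      Real.pow_rpow_inv_natCast hx.le (by omega)]
  have hF : 0 < profileFun d ℓ (Q ξ) / c := by rw [← (h ξ hξ.le).2]; positivity
  have hdQ : 0 ≤ 1 - d * Q ξ := sub_nonneg.2 ((le_div_iff₀' hd).1 (h ξ hξ.le).1.2)
  have hnum : 0 < d * Q ξ + ℓ * (1 - d * Q ξ) := by positivity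
  refine (HasDerivAt.of_local_left_inverse (h.continuousAt hd hc hℓ hξ)
    (((hasDerivAt_profileFun hQ.ne').div_const c).rpow_const (Or.inl hF.ne')) ?_
    hinv).differentiableAt
  have hp : ((2 * ℓ : ℕ) : ℝ)⁻¹ ≠ 0 := by positivity
  exact mul_ne_zero (mul_ne_zero (div_ne_zero (div_ne_zero (neg_ne_zero.2 hnum.ne')
    (pow_pos hQ _).ne') hc.ne') hp) (Real.rpow_pos_of_pos hF _).ne'

theorem ode (h : IsProfile d ℓ c Q) (hd : 0 < d) (hc : 0 < c) (hℓ : ℓ ≠ 0)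
    (hdℓ : (ℓ : ℝ) * (d - 2) = d) (hξ : 0 < ξ) :
    d * Q ξ * (Q ξ - 1 / d) + (Q ξ - 1 / 2) * ξ * deriv Q ξ = 0 := by
  have hQ' := (h.differentiableAt hd hc hℓ hξ).hasDerivAt
  have hconst : HasDerivAt (fun x => c * x ^ (2 * ℓ) * Q x ^ ℓ + d * Q x) 0 ξ :=
    (hasDerivAt_const ξ (1 : ℝ)).congr_of_eventuallyEq <| by
      filter_upwards [Ioi_mem_nhds hξ] with x hx using h.mul_add_eq_one hx.le
  have hE := ((((hasDerivAt_pow (2 * ℓ) ξ).const_mul c).mul (hQ'.pow ℓ)).add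
    (hQ'.const_mul d)).unique hconst
  push_cast [Pi.pow_apply] at hE
  have hξpow := mul_pow_sub_one (by omega : 2 * ℓ ≠ 0) ξ
  have hQpow := mul_pow_sub_one hℓ (Q ξ)
  have hrel := h.mul_add_eq_one hξ.le
  -- multiply the differentiated relation by `ξ Q ξ` and eliminate `c ξ^(2ℓ) Q^ℓ` via `hrel`
  have h2ℓ : 2 * (ℓ : ℝ) * (d * Q ξ ^ 2 - Q ξ + (Q ξ - 1 / 2) * ξ * deriv Q ξ) = 0 := by
    linear_combination (-(ξ * Q ξ)) * hE + 2 * ℓ * c * Q ξ ^ ℓ * Q ξ * hξpow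
      + ℓ * c * ξ ^ (2 * ℓ) * ξ * deriv Q ξ * hQpow
      + (2 * ℓ * Q ξ + ℓ * ξ * deriv Q ξ) * hrel - Q ξ * ξ * deriv Q ξ * hdℓ
  have hG := (mul_eq_zero.1 h2ℓ).resolve_left (by positivity)
  linear_combination hG - Q ξ * mul_one_div_cancel hd.ne'

theorem deriv_neg (h : IsProfile d ℓ c Q) (hd : 0 < d) (hc : 0 < c) (hℓ : ℓ ≠ 0)
    (hdℓ : (ℓ : ℝ) * (d - 2) = d) (hξ : 0 < ξ) : deriv Q ξ < 0 := by
  have hQ := h.pos hξ.le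
  have hQd := h.lt_one_div hd hc hℓ hξ
  have hd2 : 2 < d := by nlinarith [(Nat.cast_nonneg ℓ : (0 : ℝ) ≤ ℓ)]
  have hQ2 : Q ξ < 1 / 2 := hQd.trans (one_div_lt_one_div_of_lt two_pos hd2)
  -- by the ODE, `(1/2 - Q) ξ (-Q') = d Q (1/d - Q) > 0`
  have hprod : 0 < (1 / 2 - Q ξ) * ξ * -deriv Q ξ := by
    have := mul_pos (mul_pos hd hQ) (sub_pos.2 hQd)
    linear_combination this - h.ode hd hc hℓ hdℓ hξ
  exact neg_pos.1 (pos_of_mul_pos_right hprod (mul_pos (sub_pos.2 hQ2) hξ).le)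

end IsProfile

/-- Definition and basic properties of the blowup profile `Q`: existence and uniqueness of
`Q(ξ) ∈ (0,1/d]` with `c ξ^{2ℓ} = (1 − dQ)/Q^ℓ`, the value `Q(0) = 1/d`, strict
monotonicity (`Q' < 0` on `(0,∞)`), decay at infinity, and the profile ODE. -/
theorem profile_Q_properties
    (d : ℕ) (hd : d = 3 ∨ d = 4)
    (ℓ : ℕ) (hℓ : ℓ = d / (d - 2))
    (c : ℝ) (hc : 0 < c) :
    (∀ ξ : ℝ, 0 ≤ ξ → ∃! q : ℝ,
      q ∈ Set.Ioc 0 (1 / (d : ℝ)) ∧ c * ξ ^ (2 * ℓ) = (1 - (d : ℝ) * q) / q ^ ℓ) ∧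
    (∀ Q : ℝ → ℝ,
      (∀ ξ : ℝ, 0 ≤ ξ → Q ξ ∈ Set.Ioc 0 (1 / (d : ℝ)) ∧
        c * ξ ^ (2 * ℓ) = (1 - (d : ℝ) * Q ξ) / Q ξ ^ ℓ) →
      -- (b) Q(0) = 1/d
      Q 0 = 1 / (d : ℝ) ∧
      -- (c) differentiability and strict decrease on (0,∞)
      (∀ ξ : ℝ, 0 < ξ → DifferentiableAt ℝ Q ξ ∧ deriv Q ξ < 0) ∧
      (∀ ξ : ℝ, 0 < ξ → 0 < Q ξ ∧ Q ξ < 1 / (d : ℝ)) ∧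
      -- (d) decay at infinity
      Tendsto Q atTop (nhds 0) ∧
      -- (e) the profile ODE
      (∀ ξ : ℝ, 0 < ξ →
        (d : ℝ) * Q ξ * (Q ξ - 1 / (d : ℝ)) + (Q ξ - 1 / 2) * ξ * deriv Q ξ = 0)) := by
  obtain ⟨hd₀, hℓ₀, hdℓ⟩ : (0 : ℝ) < d ∧ ℓ ≠ 0 ∧ (ℓ : ℝ) * ((d : ℝ) - 2) = d := by
    rcases hd with rfl | rfl <;> subst hℓ <;> norm_num
  refine ⟨fun ξ _ => existsUnique_profileFun_eq hd₀ hℓ₀ (by positivity), fun Q hQ => ?_⟩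
  have h : IsProfile d ℓ c Q := hQ
  exact ⟨h.zero hd₀ hℓ₀,
    fun ξ hξ => ⟨h.differentiableAt hd₀ hc hℓ₀ hξ, h.deriv_neg hd₀ hc hℓ₀ hdℓ hξ⟩,
    fun ξ hξ => ⟨h.pos hξ.le, h.lt_one_div hd₀ hc hℓ₀ hξ⟩,
    h.tendsto_atTop_zero hd₀ hc hℓ₀,
    fun ξ hξ => h.ode hd₀ hc hℓ₀ hdℓ hξ⟩
end

section
/- Fix d ∈ {3,4}, set ℓ = d/(d-2), and let c > 0. Let Q : [0,∞) → (0, 1/d] be the unique function satisfying c·ξ^{2ℓ} = (1 − d·Q(ξ))/Q(ξ)^ℓ for all ξ ≥ 0. Then there exist constants C > 0 and ξ₀ > 0 such that |Q(ξ) − c^{-1/ℓ}·ξ^{-2}| ≤ C·ξ^{-4} for all ξ ≥ ξ₀; in particular ξ²·Q(ξ) → c^{-1/ℓ} as ξ → ∞. -/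
/-!
With `b = c^{1/ℓ}` and `x = b ξ² Q(ξ)`, the defining relation reads `x^ℓ = 1 - d Q(ξ) ≤ 1`.
Hence `x ≤ 1` and so `x^ℓ ≤ x`, i.e. `1 - d Q(ξ) ≤ b ξ² Q(ξ) ≤ 1`. The right inequality gives
`Q(ξ) ≤ b⁻¹ ξ⁻²`, and feeding it back into the left one gives `Q(ξ) ≥ b⁻¹ ξ⁻² - d b⁻² ξ⁻⁴`.
-/

open Filter

theorem abs_sub_inv_le_of_mul_pow_eq_one_sub {ℓ : ℕ} {d t q : ℝ} (hℓ : ℓ ≠ 0) (hd : 0 ≤ d)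
    (ht : 0 < t) (hq : 0 < q) (h : (t * q) ^ ℓ = 1 - d * q) :
    |q - t⁻¹| ≤ d / t ^ 2 := by
  have htq : 0 ≤ t * q := by positivity
  have hle_one : t * q ≤ 1 :=
    (pow_le_one_iff_of_nonneg htq hℓ).1 (by rw [h]; nlinarith [mul_nonneg hd hq.le])
  have hlow : 1 - d * q ≤ t * q := h ▸ pow_le_of_le_one htq hle_one hℓ
  have hup : q ≤ t⁻¹ :=
    calc q = t⁻¹ * (t * q) := by field_simp
      _ ≤ t⁻¹ * 1 := by gcongr
      _ = t⁻¹ := mul_one _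
  rw [abs_sub_comm, abs_of_nonneg (sub_nonneg.2 hup), sub_le_comm]
  calc t⁻¹ - d / t ^ 2 = t⁻¹ * (1 - d * t⁻¹) := by ring
    _ ≤ t⁻¹ * (1 - d * q) := by gcongr
    _ ≤ t⁻¹ * (t * q) := by gcongr
    _ = q := by field_simp

theorem tendsto_sq_mul_of_abs_sub_div_sq_le {f : ℝ → ℝ} {a C : ℝ}
    (h : ∀ᶠ ξ in atTop, |f ξ - a / ξ ^ 2| ≤ C / ξ ^ 4) :
    Tendsto (fun ξ => ξ ^ 2 * f ξ) atTop (nhds a) := by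
  rw [← tendsto_sub_nhds_zero_iff]
  refine squeeze_zero_norm' ?_
    ((tendsto_const_nhds (x := C)).div_atTop (tendsto_pow_atTop two_ne_zero))
  filter_upwards [h, eventually_gt_atTop 0] with ξ hξ hξ0
  calc ‖ξ ^ 2 * f ξ - a‖ = ξ ^ 2 * |f ξ - a / ξ ^ 2| := by
        rw [Real.norm_eq_abs, show ξ ^ 2 * f ξ - a = ξ ^ 2 * (f ξ - a / ξ ^ 2) by field_simp,
          abs_mul, abs_of_pos (pow_pos hξ0 2)]
    _ ≤ ξ ^ 2 * (C / ξ ^ 4) := by gcongr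
    _ = C / ξ ^ 2 := by field_simp

/-- Asymptotics of the profile at infinity: `Q(ξ) = c^{-1/ℓ} ξ^{-2} + O(ξ^{-4})` as
`ξ → ∞`; in particular `ξ² Q(ξ) → c^{-1/ℓ}`. -/
theorem profile_Q_asymptotics_at_infinity
    (d : ℕ) (hd : d = 3 ∨ d = 4)
    (ℓ : ℕ) (hℓ : ℓ = d / (d - 2))
    (c : ℝ) (hc : 0 < c)
    (Q : ℝ → ℝ)
    (hQ : ∀ ξ : ℝ, 0 ≤ ξ → Q ξ ∈ Set.Ioc 0 (1 / (d : ℝ)) ∧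
      c * ξ ^ (2 * ℓ) = (1 - (d : ℝ) * Q ξ) / Q ξ ^ ℓ) :
    (∃ C : ℝ, 0 < C ∧ ∃ ξ₀ : ℝ, 0 < ξ₀ ∧ ∀ ξ : ℝ, ξ₀ ≤ ξ →
      |Q ξ - c ^ (-(1 : ℝ) / (ℓ : ℝ)) / ξ ^ 2| ≤ C / ξ ^ 4) ∧
    Tendsto (fun ξ : ℝ => ξ ^ 2 * Q ξ) atTop (nhds (c ^ (-(1 : ℝ) / (ℓ : ℝ)))) := by
  have hℓ₀ : ℓ ≠ 0 := by rcases hd with rfl | rfl <;> omega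
  have hd₀ : (0 : ℝ) < d := by rcases hd with rfl | rfl <;> norm_num
  set b := c ^ (ℓ : ℝ)⁻¹
  have hb : 0 < b := by positivity
  have hbc : b ^ ℓ = c := Real.rpow_inv_natCast_pow hc.le hℓ₀
  have key : ∀ ξ, 0 < ξ → |Q ξ - b⁻¹ / ξ ^ 2| ≤ d * b⁻¹ ^ 2 / ξ ^ 4 := by
    intro ξ hξ
    obtain ⟨⟨hq, -⟩, heq⟩ := hQ ξ hξ.le
    have hpow : (b * ξ ^ 2 * Q ξ) ^ ℓ = 1 - d * Q ξ := by
      rw [mul_pow, mul_pow, hbc, ← pow_mul, heq, div_mul_cancel₀ _ (pow_ne_zero _ hq.ne')]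
    have h := abs_sub_inv_le_of_mul_pow_eq_one_sub hℓ₀ hd₀.le (by positivity) hq hpow
    rwa [show (b * ξ ^ 2)⁻¹ = b⁻¹ / ξ ^ 2 by ring,
      show d / (b * ξ ^ 2) ^ 2 = d * b⁻¹ ^ 2 / ξ ^ 4 by ring] at h
  have hcb : c ^ (-(1 : ℝ) / ℓ) = b⁻¹ := by rw [neg_div, Real.rpow_neg hc.le, one_div]
  rw [hcb]
  refine ⟨⟨d * b⁻¹ ^ 2, by positivity, 1, one_pos, fun ξ hξ => key ξ (by linarith)⟩, ?_⟩
  exact tendsto_sq_mul_of_abs_sub_div_sq_le ((eventually_gt_atTop 0).mono key)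
end

section
/- Let d ≥ 3 be an integer, α > 0, and n ∈ ℕ. Suppose P : [0,∞) → ℝ is a polynomial satisfying P''(y) + ((d-1)/y)·P'(y) − α·y·P'(y) = −2nα·P(y) for all y > 0. Define V(y) = y^{-d}·∫₀^y P(ζ)·ζ^{d-1} dζ for y > 0. Then V satisfies V''(y) + ((d+1)/y)·V'(y) − α·y·V'(y) = −2nα·V(y) for all y > 0; that is, the partial-mass transform maps eigenfunctions of the radial Hermite operator Δ_d − αy∂_y in dimension d to eigenfunctions of Δ_{d+2} − αy∂_y in dimension d+2 with the same eigenvalue. -/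
/-!
Write `M(y) = ∫₀^y P(ζ) ζ^{d-1} dζ`, so that `V = M / y^d` and `P = d V + y V'`. Multiplying the
eigenvalue equation for `P` (eigenvalue `μ`, here `-2nα`) by `y^{d-1}` shows that
`G(y) = y^{d-1} P'(y) - α y^d P(y) + (α d - μ) M(y)` has derivative zero on `(0, ∞)`; since `d ≥ 2`
it vanishes at `0`, hence `P' = α y P - (α d - μ) y V`. Differentiating `P = d V + y V'` once more
gives `P' = (d + 1) V' + y V''`, and equating the two expressions for `P'` is the eigenvalue
equation for `V` in dimension `d + 2`.
-/

open Filter Set Topology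

namespace PartialMass

noncomputable def radialMass (d : ℕ) (P : ℝ → ℝ) (y : ℝ) : ℝ :=
  ∫ ζ in (0 : ℝ)..y, P ζ * ζ ^ (d - 1)

noncomputable def partialMass (d : ℕ) (P : ℝ → ℝ) (y : ℝ) : ℝ :=
  1 / y ^ d * radialMass d P y

variable {d : ℕ} {P : ℝ → ℝ} {y : ℝ}

@[simp]
lemma radialMass_zero : radialMass d P 0 = 0 :=
  intervalIntegral.integral_same

lemma hasDerivAt_radialMass (hP : Continuous P) (y : ℝ) :
    HasDerivAt (radialMass d P) (P y * y ^ (d - 1)) y :=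
  ((hP.mul (continuous_pow _)).integral_hasStrictDerivAt 0 y).hasDerivAt

lemma radialMass_eq_pow_mul_partialMass (hy : 0 < y) :
    radialMass d P y = y ^ d * partialMass d P y := by
  rw [partialMass, ← mul_assoc, mul_one_div_cancel (pow_ne_zero d hy.ne'), one_mul]

lemma hasDerivAt_partialMass (hP : Continuous P) (hd : 0 < d) (hy : 0 < y) :
    HasDerivAt (partialMass d P) ((P y - d * partialMass d P y) / y) y := by
  have h := (hasDerivAt_radialMass (d := d) hP y).div (hasDerivAt_pow d y) (pow_ne_zero d hy.ne')
  have hfun : (radialMass d P / fun t => t ^ d) = partialMass d P := by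
    funext t; rw [Pi.div_apply, partialMass, one_div_mul_eq_div]
  rw [hfun] at h
  refine h.congr_deriv ?_
  obtain ⟨k, rfl⟩ : ∃ k, d = k + 1 := ⟨d - 1, by omega⟩
  rw [radialMass_eq_pow_mul_partialMass hy]
  field_simp
  simp only [Nat.add_sub_cancel, pow_succ]
  push_cast
  ring

lemma deriv_partialMass (hP : Continuous P) (hd : 0 < d) (hy : 0 < y) :
    deriv (partialMass d P) y = (P y - d * partialMass d P y) / y :=
  (hasDerivAt_partialMass hP hd hy).deriv

lemma deriv_deriv_partialMass (hP : Differentiable ℝ P) (hd : 0 < d) (hy : 0 < y) :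
    deriv (deriv (partialMass d P)) y
      = (deriv P y - (d + 1) * deriv (partialMass d P) y) / y := by
  have hV' : deriv (partialMass d P) =ᶠ[𝓝 y] fun t => (P t - d * partialMass d P t) / t := by
    filter_upwards [Ioi_mem_nhds hy] with t ht using deriv_partialMass hP.continuous hd ht
  have h : HasDerivAt (fun t => (P t - d * partialMass d P t) / t)
      (((deriv P y - d * deriv (partialMass d P) y) * y
        - (P y - d * partialMass d P y) * 1) / y ^ 2) y := by
    rw [deriv_partialMass hP.continuous hd hy]
    exact ((hP y).hasDerivAt.sub ((hasDerivAt_partialMass hP.continuous hd hy).const_mul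
      (d : ℝ))).div (hasDerivAt_id' y) hy.ne'
  rw [hV'.deriv_eq, h.deriv, deriv_partialMass hP.continuous hd hy]
  field_simp
  ring

noncomputable def hermiteFirstIntegral (d : ℕ) (α μ : ℝ) (P : ℝ → ℝ) (y : ℝ) : ℝ :=
  y ^ (d - 1) * deriv P y - α * y ^ d * P y + (α * d - μ) * radialMass d P y

variable {α μ : ℝ}

lemma hasDerivAt_hermiteFirstIntegral (hP : ContDiff ℝ 2 P) (hd : 0 < d) (hy : 0 < y)
    (hODE : deriv (deriv P) y + ((d : ℝ) - 1) / y * deriv P y - α * y * deriv P y = μ * P y) :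
    HasDerivAt (hermiteFirstIntegral d α μ P) 0 y := by
  have hP1 : Differentiable ℝ P := hP.differentiable (by norm_num)
  have hP2 : Differentiable ℝ (deriv P) := (hP.deriv' (n := 1)).differentiable (by norm_num)
  have h := (((hasDerivAt_pow (d - 1) y).mul (hP2 y).hasDerivAt).sub
    (((hasDerivAt_pow d y).const_mul α).mul (hP1 y).hasDerivAt)).add
    ((hasDerivAt_radialMass (d := d) hP1.continuous y).const_mul (α * d - μ))
  refine h.congr_deriv ?_
  rw [show deriv (deriv P) y = μ * P y - ((d : ℝ) - 1) / y * deriv P y + α * y * deriv P y by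
    linear_combination hODE]
  obtain ⟨k, rfl⟩ : ∃ k, d = k + 1 := ⟨d - 1, by omega⟩
  rcases k with _ | k
  · simp
    ring
  · simp only [Nat.add_sub_cancel, pow_succ]
    push_cast
    field_simp
    ring

lemma hermiteFirstIntegral_eq_zero (hP : ContDiff ℝ 2 P) (hd : 2 ≤ d)
    (hODE : ∀ y : ℝ, 0 < y →
      deriv (deriv P) y + ((d : ℝ) - 1) / y * deriv P y - α * y * deriv P y = μ * P y)
    (hy : 0 < y) :
    hermiteFirstIntegral d α μ P y = 0 := by
  have hcont : Continuous (hermiteFirstIntegral d α μ P) := by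
    have hP1 : Differentiable ℝ P := hP.differentiable (by norm_num)
    have hM : Continuous (radialMass d P) := continuous_iff_continuousAt.2 fun y =>
      (hasDerivAt_radialMass hP1.continuous y).continuousAt
    have hP' : Continuous (deriv P) := hP.continuous_deriv (by norm_num)
    unfold hermiteFirstIntegral
    fun_prop
  have hzero : hermiteFirstIntegral d α μ P 0 = 0 := by
    simp [hermiteFirstIntegral, zero_pow (show d - 1 ≠ 0 by omega),
      zero_pow (show d ≠ 0 by omega)]
  obtain ⟨c, -, hc⟩ := exists_hasDerivAt_eq_slope (hermiteFirstIntegral d α μ P) (fun _ => 0)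
    hy hcont.continuousOn fun x hx =>
      hasDerivAt_hermiteFirstIntegral hP (by omega) hx.1 (hODE x hx.1)
  rw [hzero, sub_zero, eq_comm, div_eq_zero_iff] at hc
  exact hc.resolve_right (sub_ne_zero.2 hy.ne')

theorem partialMass_radialHermite_eigen (hP : ContDiff ℝ 2 P) (hd : 2 ≤ d)
    (hODE : ∀ y : ℝ, 0 < y →
      deriv (deriv P) y + ((d : ℝ) - 1) / y * deriv P y - α * y * deriv P y = μ * P y)
    (hy : 0 < y) :
    deriv (deriv (partialMass d P)) y + ((d : ℝ) + 1) / y * deriv (partialMass d P) y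
      - α * y * deriv (partialMass d P) y = μ * partialMass d P y := by
  have hP1 : Differentiable ℝ P := hP.differentiable (by norm_num)
  have hderivP : deriv P y = α * y * P y - (α * d - μ) * y * partialMass d P y := by
    have h := hermiteFirstIntegral_eq_zero hP hd hODE hy
    obtain ⟨k, rfl⟩ : ∃ k, d = k + 1 := ⟨d - 1, by omega⟩
    rw [hermiteFirstIntegral, radialMass_eq_pow_mul_partialMass hy, Nat.add_sub_cancel] at h
    have h' : y ^ k * (deriv P y
        - (α * y * P y - (α * ↑(k + 1) - μ) * y * partialMass (k + 1) P y)) = 0 := by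
      linear_combination h
    exact sub_eq_zero.1 ((mul_eq_zero.1 h').resolve_left (pow_ne_zero k hy.ne'))
  rw [deriv_deriv_partialMass hP1 (by omega) hy, deriv_partialMass hP1.continuous (by omega) hy,
    hderivP]
  field_simp
  ring

end PartialMass

open PartialMass in
theorem partial_mass_transform_of_eigenfunction_general
    (d : ℕ) (hd : 3 ≤ d) (α : ℝ) (n : ℕ)
    (P : ℝ → ℝ) (hpoly : ∃ p : Polynomial ℝ, ∀ x : ℝ, P x = p.eval x)
    (hODE : ∀ y : ℝ, 0 < y →
      deriv (deriv P) y + ((d : ℝ) - 1) / y * deriv P y - α * y * deriv P y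
        = -(2 * (n : ℝ) * α) * P y)
    (V : ℝ → ℝ)
    (hV : ∀ y : ℝ, 0 < y → V y = 1 / y ^ d * ∫ ζ in (0 : ℝ)..y, P ζ * ζ ^ (d - 1)) :
    ∀ y : ℝ, 0 < y →
      deriv (deriv V) y + ((d : ℝ) + 1) / y * deriv V y - α * y * deriv V y
        = -(2 * (n : ℝ) * α) * V y := by
  intro y hy
  obtain ⟨p, hp⟩ := hpoly
  have hP : ContDiff ℝ 2 P := by
    rw [funext hp]
    simpa using p.contDiff_aeval (𝕜 := ℝ) 2
  have hVM : V =ᶠ[𝓝 y] partialMass d P := by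
    filter_upwards [Ioi_mem_nhds hy] with t ht using hV t ht
  rw [hVM.deriv.deriv_eq, hVM.deriv_eq, hVM.eq_of_nhds]
  exact partialMass_radialHermite_eigen hP (by omega) hODE hy

/-- The partial-mass transform `V(y) = y^{-d} ∫₀^y P(ζ) ζ^{d-1} dζ` maps eigenfunctions of
the radial Hermite operator `Δ_d − αy∂_y` (with eigenvalue `−2nα`) to eigenfunctions of
`Δ_{d+2} − αy∂_y` with the same eigenvalue. -/
theorem partial_mass_transform_of_eigenfunction
    (d : ℕ) (hd : 3 ≤ d) (α : ℝ) (hα : 0 < α) (n : ℕ)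
    (P : ℝ → ℝ) (hpoly : ∃ p : Polynomial ℝ, ∀ x : ℝ, P x = p.eval x)
    (hODE : ∀ y : ℝ, 0 < y →
      deriv (deriv P) y + ((d : ℝ) - 1) / y * deriv P y - α * y * deriv P y
        = -(2 * (n : ℝ) * α) * P y)
    (V : ℝ → ℝ)
    (hV : ∀ y : ℝ, 0 < y → V y = 1 / y ^ d * ∫ ζ in (0 : ℝ)..y, P ζ * ζ ^ (d - 1)) :
    ∀ y : ℝ, 0 < y →
      deriv (deriv V) y + ((d : ℝ) + 1) / y * deriv V y - α * y * deriv V y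
        = -(2 * (n : ℝ) * α) * V y :=
  partial_mass_transform_of_eigenfunction_general d hd α n P hpoly hODE V hV
end
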